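/- arXiv:2507.07003 — 3 statements merged into one kernel-verified Lean document; each statement's English description precedes it below -/
import Mathlib

section
/- For every n ≥ 3, every vertex x of P_SEP(n), and every 1-edge ab of x, the BB-move is Gap⁺-increasing: Gap⁺(BB(x, ab)) ≥ Gap⁺(x). -/
open Finset

/-- Membership in the subtour-elimination polytope `P_SEP(n)`.
A point is encoded as a symmetric matrix with zero diagonal; the entry `x i j`
is the value on the (undirected) edge `ij` of the complete graph `K_n`. -/
def InPSEP (n : ℕ) (x : Fin n → Fin n → ℝ) : Prop :=
  (∀ i j, x i j = x j i) ∧ (∀ i, x i i = 0) ∧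
  (∀ v, (∑ j, x v j) = 2) ∧
  (∀ S : Finset (Fin n), 3 ≤ S.card → S.card + 3 ≤ n →
    2 ≤ ∑ i ∈ S, ∑ j ∈ Sᶜ, x i j) ∧
  (∀ i j, 0 ≤ x i j ∧ x i j ≤ 1)

/-- The subtour-elimination polytope, as a set. -/
def PSEP (n : ℕ) : Set (Fin n → Fin n → ℝ) := {x | InPSEP n x}

/-- `x` is a vertex (extreme point) of `P_SEP(n)`. -/
def IsVertex (n : ℕ) (x : Fin n → Fin n → ℝ) : Prop :=
  x ∈ (PSEP n).extremePoints ℝ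

/-- A metric cost vector on `K_n`: symmetric, zero diagonal, nonnegative,
satisfying the triangle inequality. -/
def IsMetric (n : ℕ) (c : Fin n → Fin n → ℝ) : Prop :=
  (∀ i j, c i j = c j i) ∧ (∀ i, c i i = 0) ∧ (∀ i j, 0 ≤ c i j) ∧
  (∀ i j k, i ≠ j → j ≠ k → i ≠ k → c i j ≤ c i k + c k j)

/-- The "dot product" `c · x` over the edges of `K_n` (each undirected edge
counted once, whence the division by `2`). -/
noncomputable def dotE (n : ℕ) (c x : Fin n → Fin n → ℝ) : ℝ :=
  (∑ i, ∑ j, c i j * x i j) / 2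

/-- The cost of the Hamiltonian tour that visits the nodes in the cyclic order
`σ 0, σ 1, …, σ (n-1), σ 0`. -/
noncomputable def tourCost (n : ℕ) (c : Fin n → Fin n → ℝ) (σ : Equiv.Perm (Fin n)) : ℝ :=
  ∑ i, c (σ i) (σ (finRotate n i))

/-- `TSP(c)`: minimum cost of a Hamiltonian tour. -/
noncomputable def TSP (n : ℕ) (c : Fin n → Fin n → ℝ) : ℝ :=
  sInf {r | ∃ σ : Equiv.Perm (Fin n), r = tourCost n c σ}

/-- `SEP(c)`: optimal value of the subtour-elimination relaxation. -/
noncomputable def SEP (n : ℕ) (c : Fin n → Fin n → ℝ) : ℝ :=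
  sInf {r | ∃ x, InPSEP n x ∧ r = dotE n c x}

/-- `Gap(x)`: the supremum of `TSP(c)/SEP(c)` over metric costs `c` with
`SEP(c) > 0` for which `x` is an optimal solution of `SEP(c)`. -/
noncomputable def Gap (n : ℕ) (x : Fin n → Fin n → ℝ) : ℝ :=
  sSup {r | ∃ c, IsMetric n c ∧ 0 < SEP n c ∧ dotE n c x = SEP n c ∧
    r = TSP n c / SEP n c}

/-- `Gap⁺(x)`: the supremum of `TSP(c)/(c·x)` over metric costs `c` with `c·x > 0`. -/
noncomputable def GapPlus (n : ℕ) (x : Fin n → Fin n → ℝ) : ℝ :=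
  sSup {r | ∃ c, IsMetric n c ∧ 0 < dotE n c x ∧ r = TSP n c / dotE n c x}

open Classical in
/-- The number of edges of the support graph `G_x` (non-zero components of `x`). -/
noncomputable def supportSize (n : ℕ) (x : Fin n → Fin n → ℝ) : ℕ :=
  (Finset.univ.filter fun p : Fin n × Fin n => p.1 < p.2 ∧ x p.1 p.2 ≠ 0).card

open Classical in
/-- The degree of the node `v` in the support graph `G_x`. -/
noncomputable def suppDegree (n : ℕ) (x : Fin n → Fin n → ℝ) (v : Fin n) : ℕ :=
  (Finset.univ.filter fun j : Fin n => j ≠ v ∧ x v j ≠ 0).card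

/-- `x` is fractional: some edge has value not in `{0,1}`. -/
def IsFracPoint (n : ℕ) (x : Fin n → Fin n → ℝ) : Prop :=
  ∃ i j, i ≠ j ∧ x i j ≠ 0 ∧ x i j ≠ 1

/-- The BB-move `BB(x, ab)`: a new node `w = Fin.last n` is added, the edge `ab`
is set to `0`, the edges `aw, wb` are set to `1`, all other edges at `w` are `0`,
and the remaining entries are copied from `x`. -/
noncomputable def BB {n : ℕ} (x : Fin n → Fin n → ℝ) (a b : Fin n)
    (i j : Fin (n + 1)) : ℝ :=
  if hi : i = Fin.last n then
    (if j = Fin.castSucc a ∨ j = Fin.castSucc b then 1 else 0)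
  else if hj : j = Fin.last n then
    (if i = Fin.castSucc a ∨ i = Fin.castSucc b then 1 else 0)
  else if (i = Fin.castSucc a ∧ j = Fin.castSucc b) ∨
          (i = Fin.castSucc b ∧ j = Fin.castSucc a) then 0
  else x (i.castPred hi) (j.castPred hj)

/-- `IsSuccessor x y`: `y` is obtained from `x` by a finite (possibly empty)
sequence of BB-moves, each applied on a `1`-edge. -/
inductive IsSuccessor : {n m : ℕ} → (Fin n → Fin n → ℝ) → (Fin m → Fin m → ℝ) → Prop
  | refl {n : ℕ} (x : Fin n → Fin n → ℝ) : IsSuccessor x x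
  | step {n m : ℕ} (x : Fin n → Fin n → ℝ) (y : Fin m → Fin m → ℝ) (a b : Fin m) :
      IsSuccessor x y → a ≠ b → y a b = 1 → IsSuccessor x (BB y a b)

/-- The consecutive pairs of a cyclic sequence of nodes (including the
wrap-around pair). -/
def cyclicPairs {n : ℕ} (p : List (Fin n)) : List (Fin n × Fin n) :=
  p.zip (p.rotate 1)

/-- The multiplicity with which the closed walk `p` traverses the undirected
edge `ij`. -/
def multE {n : ℕ} (p : List (Fin n)) (i j : Fin n) : ℕ :=
  (cyclicPairs p).countP fun q =>
    decide ((q.1 = i ∧ q.2 = j) ∨ (q.1 = j ∧ q.2 = i))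

/-- `p` is a Hamiltonian walk on the graph with adjacency relation `A`:
a nonempty closed walk visiting every node at least once, using only edges of
the graph, and traversing every edge at most twice. -/
def IsHamWalk {n : ℕ} (A : Fin n → Fin n → Prop) (p : List (Fin n)) : Prop :=
  p ≠ [] ∧ (∀ v : Fin n, v ∈ p) ∧ (∀ q ∈ cyclicPairs p, A q.1 q.2) ∧
  (∀ i j : Fin n, multE p i j ≤ 2)

/-- Admissibility of the `λ` variables of the LPs `DOPT⁺` and `DOPTI`:
nonnegative, symmetric in the first two (edge) indices, and supported on
genuine triples. -/
def LamOK (n : ℕ) (lam : Fin n → Fin n → Fin n → ℝ) : Prop :=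
  (∀ i j k, 0 ≤ lam i j k) ∧ (∀ i j k, lam i j k = lam j i k) ∧
  (∀ i j k, i = j ∨ k = i ∨ k = j → lam i j k = 0)

/-- The term `∑_{k ≠ i,j} (−λ_{ijk} + λ_{ikj} + λ_{jki})` of the LP constraints. -/
noncomputable def lamTerm (n : ℕ) (lam : Fin n → Fin n → Fin n → ℝ) (i j : Fin n) : ℝ :=
  ∑ k ∈ ({i, j} : Finset (Fin n))ᶜ, (-lam i j k + lam i k j + lam j k i)

/-- The characteristic vector `t_{ij}` of the tour `σ` on the edge `ij`. -/
def tourMult (n : ℕ) (σ : Equiv.Perm (Fin n)) (i j : Fin n) : ℕ :=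
  (Finset.univ.filter fun k : Fin n =>
    (σ k = i ∧ σ (finRotate n k) = j) ∨ (σ k = j ∧ σ (finRotate n k) = i)).card

/-- Feasibility for the LP `DOPT⁺(x)`. -/
def DOPTplusFeasible (n : ℕ) (x : Fin n → Fin n → ℝ)
    (lam : Fin n → Fin n → Fin n → ℝ) (μ : Equiv.Perm (Fin n) → ℝ) : Prop :=
  LamOK n lam ∧ (∀ σ, 0 ≤ μ σ) ∧
  (∀ i j, i ≠ j →
    lamTerm n lam i j + ∑ σ : Equiv.Perm (Fin n), (tourMult n σ i j : ℝ) * μ σ ≤ x i j)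

/-- The optimal value of the LP `DOPT⁺(x)`. -/
noncomputable def DOPTplus (n : ℕ) (x : Fin n → Fin n → ℝ) : ℝ :=
  sSup {r | ∃ lam μ, DOPTplusFeasible n x lam μ ∧ r = ∑ σ : Equiv.Perm (Fin n), μ σ}

/-- Feasibility for the LP `DOPTI(x)`: `μ` is a finitely supported nonnegative
assignment on Hamiltonian walks of `K_n`. -/
def DOPTIFeasible (n : ℕ) (x : Fin n → Fin n → ℝ)
    (lam : Fin n → Fin n → Fin n → ℝ) (μ : List (Fin n) →₀ ℝ) : Prop :=
  LamOK n lam ∧ (∀ p, 0 ≤ μ p) ∧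
  (∀ p ∈ μ.support, IsHamWalk (fun i j : Fin n => i ≠ j) p) ∧
  (∀ i j, i ≠ j →
    lamTerm n lam i j + ∑ p ∈ μ.support, (multE p i j : ℝ) * μ p ≤ x i j)

/-- The optimal value of the LP `DOPTI(x)`. -/
noncomputable def DOPTI (n : ℕ) (x : Fin n → Fin n → ℝ) : ℝ :=
  sSup {r | ∃ lam μ, DOPTIFeasible n x lam μ ∧ r = ∑ p ∈ μ.support, μ p}

/-- Feasibility for the LP `DOPTII(x)`: `μ` is a finitely supported nonnegative
assignment on Hamiltonian walks of the support graph `G_x`, satisfying the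
edge constraints on `E_x`. -/
def DOPTIIFeasible (n : ℕ) (x : Fin n → Fin n → ℝ) (μ : List (Fin n) →₀ ℝ) : Prop :=
  (∀ p, 0 ≤ μ p) ∧
  (∀ p ∈ μ.support, IsHamWalk (fun i j : Fin n => i ≠ j ∧ 0 < x i j) p) ∧
  (∀ i j, i ≠ j → 0 < x i j →
    ∑ p ∈ μ.support, (multE p i j : ℝ) * μ p ≤ x i j)

/-- The optimal value of the LP `DOPTII(x)`. -/
noncomputable def DOPTII (n : ℕ) (x : Fin n → Fin n → ℝ) : ℝ :=
  sSup {r | ∃ μ, DOPTIIFeasible n x μ ∧ r = ∑ p ∈ μ.support, μ p}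

/-- The constant `C(x, ab) = 2∑_{w_{ab}=0} μ_w + ∑_{w_{ab}=1} μ_w + 2∑_{w_{ab}=2} μ_w`. -/
noncomputable def Cconst {n : ℕ} (μ : List (Fin n) →₀ ℝ) (a b : Fin n) : ℝ :=
  2 * ∑ p ∈ μ.support.filter (fun p => multE p a b = 0), μ p
    + ∑ p ∈ μ.support.filter (fun p => multE p a b = 1), μ p
    + 2 * ∑ p ∈ μ.support.filter (fun p => multE p a b = 2), μ p

/-- The constant `C*(x) = max over 1-edges e of x of C(x, e)`. -/
noncomputable def Cstar {n : ℕ} (x : Fin n → Fin n → ℝ) (μ : List (Fin n) →₀ ℝ) : ℝ :=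
  sSup {r | ∃ a b : Fin n, a ≠ b ∧ x a b = 1 ∧ r = Cconst μ a b}

/-- The node from which the `(d+1)`-st BB-move expands the current `1`-path:
for `d = 0` it is `a` itself, afterwards it is the last inserted node. -/
def aNode {n : ℕ} (a : Fin n) : (d : ℕ) → Fin (n + d)
  | 0 => a
  | d + 1 => Fin.last (n + d)

/-- `d` consecutive BB-moves expanding the `1`-edge `ab` into a `1`-path
with `d` internal nodes. -/
noncomputable def BBiter {n : ℕ} (x : Fin n → Fin n → ℝ) (a b : Fin n) :
    (d : ℕ) → Fin (n + d) → Fin (n + d) → ℝ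
  | 0 => x
  | d + 1 => BB (BBiter x a b d) (aNode a d) (Fin.castLE (Nat.le_add_right n d) b)

/-- Extension of the cost `c` on `K_n` to `K_{n+1}` by adding a new node
`w = Fin.last n` at distance `0` from `b`. -/
noncomputable def extendCost {n : ℕ} (c : Fin n → Fin n → ℝ) (b : Fin n)
    (i j : Fin (n + 1)) : ℝ :=
  if hi : i = Fin.last n then
    (if hj : j = Fin.last n then 0 else c (j.castPred hj) b)
  else if hj : j = Fin.last n then c (i.castPred hi) b
  else c (i.castPred hi) (j.castPred hj)

/-- The cost of a (not necessarily closed) path, given as the list of its nodes. -/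
noncomputable def pathCost {n : ℕ} (c : Fin n → Fin n → ℝ) (p : List (Fin n)) : ℝ :=
  ((p.zip p.tail).map fun q => c q.1 q.2).sum

/-- `p` is a path from `i` to `j` in the graph with adjacency relation `A`. -/
def IsPathIn {n : ℕ} (A : Fin n → Fin n → Prop) (i j : Fin n) (p : List (Fin n)) : Prop :=
  p.head? = some i ∧ p.getLast? = some j ∧ List.Chain' (fun u v => A u v) p

open Classical in
/-- The metric completion of the restriction of `c` to the graph with adjacency
relation `A`: on edges of the graph it is `c`, elsewhere it is the cost of a
shortest path in the graph. -/
noncomputable def metricCompletion (n : ℕ) (A : Fin n → Fin n → Prop)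
    (c : Fin n → Fin n → ℝ) (i j : Fin n) : ℝ :=
  if A i j then c i j else sInf {r | ∃ p, IsPathIn A i j p ∧ r = pathCost c p}

/-- A (nonempty, injective) chain of `1`-edges of `x`. -/
def IsOneChain {n : ℕ} (x : Fin n → Fin n → ℝ) (p : List (Fin n)) : Prop :=
  2 ≤ p.length ∧ p.Nodup ∧ List.Chain' (fun i j => x i j = 1) p

/-- A `1`-path of `x`: a maximal path of `1`-edges in the support graph. -/
def IsMaxOnePath {n : ℕ} (x : Fin n → Fin n → ℝ) (p : List (Fin n)) : Prop :=
  IsOneChain x p ∧ (∀ v, ¬ IsOneChain x (v :: p)) ∧ (∀ v, ¬ IsOneChain x (p ++ [v]))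

lemma tri' {N : ℕ} {c : Fin N → Fin N → ℝ} (hc : IsMetric N c) (i j k : Fin N) :
    c i j ≤ c i k + c k j := by
  obtain ⟨hs, hd, hnn, htri⟩ := hc
  by_cases hij : i = j
  · subst hij; rw [hd]; linarith [hnn i k, hnn k i]
  by_cases hik : i = k
  · subst hik; rw [hd]; linarith
  by_cases hkj : k = j
  · subst hkj; rw [hd]; linarith
  · exact htri i j k hij (fun h => hkj h.symm) hik

def suppGraph {N : ℕ} (y : Fin N → Fin N → ℝ) : SimpleGraph (Fin N) where
  Adj i j := i ≠ j ∧ 0 < y i j ∧ 0 < y j i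
  symm := ⟨by rintro i j ⟨h1, h2, h3⟩; exact ⟨h1.symm, h3, h2⟩⟩
  loopless := ⟨by rintro i ⟨h, -⟩; exact h rfl⟩

lemma metric_le_dartSum {N : ℕ} {c : Fin N → Fin N → ℝ} (hc : IsMetric N c)
    {G : SimpleGraph (Fin N)} {u v : Fin N} (p : G.Walk u v) :
    c u v ≤ (p.darts.map fun d => c d.toProd.1 d.toProd.2).sum := by
  induction p with
  | nil => simp [hc.2.1 _]
  | @cons u' v' w' h q ih =>
    rw [SimpleGraph.Walk.darts_cons, List.map_cons, List.sum_cons]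
    calc c u' w' ≤ c u' v' + c v' w' := tri' hc _ _ _
    _ ≤ _ := by linarith

lemma cross_small {n : ℕ} {x : Fin n → Fin n → ℝ} (hx : InPSEP n x)
    (S : Finset (Fin n)) (h1 : S.Nonempty) (h2 : S.card ≤ 2) :
    0 < ∑ i ∈ S, ∑ j ∈ Sᶜ, x i j := by
  obtain ⟨hs, hd, hdeg, -, hb⟩ := hx
  have hrow : ∀ i ∈ S, ∑ j ∈ Sᶜ, x i j = 2 - ∑ j ∈ S, x i j := by
    intro i _
    have hsplit := Finset.sum_compl_add_sum S (x i)
    rw [hdeg i] at hsplit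
    linarith
  rw [Finset.sum_congr rfl hrow, Finset.sum_sub_distrib]
  have hin : ∑ i ∈ S, ∑ j ∈ S, x i j ≤ (S.card : ℝ) * ((S.card : ℝ) - 1) := by
    have hper : ∀ i ∈ S, ∑ j ∈ S, x i j ≤ (S.card : ℝ) - 1 := by
      intro i hi
      have h3 : ∑ j ∈ S, x i j ≤ ∑ j ∈ S, (if j = i then (0:ℝ) else 1) := by
        apply Finset.sum_le_sum
        intro j hj
        by_cases hji : j = i
        · subst hji; rw [hd]; simp
        · simp [hji, (hb i j).2]
      have h4 : ∑ j ∈ S, (if j = i then (0:ℝ) else 1) = (S.card : ℝ) - 1 := by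
        have : ∀ j ∈ S, (if j = i then (0:ℝ) else 1) = 1 - (if j = i then (1:ℝ) else 0) := by
          intro j _; by_cases hji : j = i <;> simp [hji]
        rw [Finset.sum_congr rfl this, Finset.sum_sub_distrib]
        rw [Finset.sum_ite_eq' S i (fun _ => (1:ℝ))]
        simp [hi]
      linarith
    calc ∑ i ∈ S, ∑ j ∈ S, x i j ≤ ∑ i ∈ S, ((S.card : ℝ) - 1) := Finset.sum_le_sum hper
    _ = (S.card : ℝ) * ((S.card : ℝ) - 1) := by rw [Finset.sum_const]; push_cast; ring
  have hcard1 : 1 ≤ (S.card : ℝ) := by exact_mod_cast Finset.card_pos.2 h1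
  have hcard2 : (S.card : ℝ) ≤ 2 := by exact_mod_cast h2
  have hconst : ∑ _i ∈ S, (2:ℝ) = 2 * (S.card : ℝ) := by rw [Finset.sum_const]; push_cast; ring
  rw [hconst]
  nlinarith

lemma cross_pos {n : ℕ} {x : Fin n → Fin n → ℝ} (hx : InPSEP n x)
    (S : Finset (Fin n)) (h1 : S.Nonempty) (h2 : S ≠ univ) :
    0 < ∑ i ∈ S, ∑ j ∈ Sᶜ, x i j := by
  have hcard : 1 ≤ S.card := Finset.card_pos.2 h1
  rcases le_or_gt S.card 2 with h | h
  · exact cross_small hx S h1 h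
  rcases le_or_gt (S.card + 3) n with hm | hm
  · calc (0:ℝ) < 2 := by norm_num
    _ ≤ _ := hx.2.2.2.1 S (by omega) hm
  · -- complement is small
    have hcompl : ∑ i ∈ S, ∑ j ∈ Sᶜ, x i j = ∑ i ∈ Sᶜ, ∑ j ∈ Sᶜᶜ, x i j := by
      rw [compl_compl, Finset.sum_comm]
      exact Finset.sum_congr rfl fun i _ => Finset.sum_congr rfl fun j _ => hx.1 j i
    rw [hcompl]
    have hSne : Sᶜ.Nonempty := by
      have : ∃ v, v ∉ S := by
        by_contra hcon; push_neg at hcon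
        exact h2 (Finset.eq_univ_iff_forall.2 hcon)
      obtain ⟨v, hv⟩ := this
      exact ⟨v, Finset.mem_compl.2 hv⟩
    have hScard : Sᶜ.card ≤ 2 := by
      rw [Finset.card_compl]
      have : S.card ≤ Fintype.card (Fin n) := Finset.card_le_univ S
      simp only [Fintype.card_fin] at *
      omega
    exact cross_small hx Sᶜ hSne hScard

lemma BB_cs_cs {n : ℕ} (x : Fin n → Fin n → ℝ) (a b : Fin n) (i j : Fin n) :
    BB x a b i.castSucc j.castSucc
      = if (i = a ∧ j = b) ∨ (i = b ∧ j = a) then 0 else x i j := by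
  unfold BB
  rw [dif_neg (Fin.castSucc_lt_last i).ne, dif_neg (Fin.castSucc_lt_last j).ne]
  simp [Fin.castSucc_inj]

lemma BB_cs_last {n : ℕ} (x : Fin n → Fin n → ℝ) (a b : Fin n) (i : Fin n) :
    BB x a b i.castSucc (Fin.last n) = if i = a ∨ i = b then 1 else 0 := by
  unfold BB
  rw [dif_neg (Fin.castSucc_lt_last i).ne, dif_pos rfl]
  simp [Fin.castSucc_inj]

lemma BB_last {n : ℕ} (x : Fin n → Fin n → ℝ) (a b : Fin n) (j : Fin (n + 1)) :
    BB x a b (Fin.last n) j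
      = if j = Fin.castSucc a ∨ j = Fin.castSucc b then 1 else 0 := by
  unfold BB; rw [dif_pos rfl]

lemma BB_nonneg {n : ℕ} {x : Fin n → Fin n → ℝ} (hx : ∀ i j, 0 ≤ x i j)
    (a b : Fin n) (i j : Fin (n + 1)) : 0 ≤ BB x a b i j := by
  induction i using Fin.lastCases with
  | last => rw [BB_last]; split <;> norm_num
  | cast i =>
    induction j using Fin.lastCases with
    | last => rw [BB_cs_last]; split <;> norm_num
    | cast j => rw [BB_cs_cs]; split; · norm_num
                exact hx i j

lemma supp_preconnected {n : ℕ} {x : Fin n → Fin n → ℝ} (hx : InPSEP n x) :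
    (suppGraph x).Preconnected := by
  classical
  intro u v
  by_contra hr
  set S : Finset (Fin n) := Finset.univ.filter (fun w => (suppGraph x).Reachable u w) with hS
  have hu : u ∈ S := by simp [hS]
  have hv : v ∉ S := by simp [hS]; exact hr
  have hzero : ∀ i ∈ S, ∀ j ∈ Sᶜ, x i j = 0 := by
    intro i hi j hj
    by_contra hne
    have hij : i ≠ j := by rintro rfl; exact (Finset.mem_compl.1 hj) hi
    have hpos : 0 < x i j := lt_of_le_of_ne (hx.2.2.2.2 i j).1 (Ne.symm hne)
    have hadj : (suppGraph x).Adj i j := ⟨hij, hpos, by rw [← hx.1 i j]; exact hpos⟩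
    have : (suppGraph x).Reachable u j :=
      ((Finset.mem_filter.1 hi).2).trans hadj.reachable
    exact (Finset.mem_compl.1 hj) (by simp [hS]; exact this)
  have hsum : ∑ i ∈ S, ∑ j ∈ Sᶜ, x i j = 0 :=
    Finset.sum_eq_zero fun i hi => Finset.sum_eq_zero fun j hj => hzero i hi j hj
  have := cross_pos hx S ⟨u, hu⟩ (fun h => hv (h ▸ Finset.mem_univ v))
  rw [hsum] at this
  exact lt_irrefl _ this

lemma BB_preconnected {n : ℕ} {x : Fin n → Fin n → ℝ} (hx : InPSEP n x)
    {a b : Fin n} (hab : a ≠ b) (h1 : x a b = 1) :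
    (suppGraph (BB x a b)).Preconnected := by
  classical
  set y := BB x a b with hy
  have hxs := hx.1
  have hxnn : ∀ i j, 0 ≤ x i j := fun i j => (hx.2.2.2.2 i j).1
  have hadj_a : (suppGraph y).Adj (Fin.castSucc a) (Fin.last n) := by
    refine ⟨(Fin.castSucc_lt_last a).ne, ?_, ?_⟩
    · rw [hy, BB_cs_last]; simp
    · rw [hy, BB_last]; simp
  have hadj_b : (suppGraph y).Adj (Fin.castSucc b) (Fin.last n) := by
    refine ⟨(Fin.castSucc_lt_last b).ne, ?_, ?_⟩
    · rw [hy, BB_cs_last]; simp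
    · rw [hy, BB_last]; simp
  have htrans : ∀ u v : Fin n, (suppGraph x).Walk u v →
      (suppGraph y).Reachable u.castSucc v.castSucc := by
    intro u v p
    induction p with
    | nil => exact SimpleGraph.Reachable.refl _
    | @cons u' v' w' h q ih =>
      refine SimpleGraph.Reachable.trans ?_ ih
      obtain ⟨huv, hpos, hpos'⟩ := h
      by_cases hcase : (u' = a ∧ v' = b) ∨ (u' = b ∧ v' = a)
      · rcases hcase with ⟨rfl, rfl⟩ | ⟨rfl, rfl⟩
        · exact hadj_a.reachable.trans hadj_b.reachable.symm
        · exact hadj_b.reachable.trans hadj_a.reachable.symm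
      · refine SimpleGraph.Adj.reachable ?_
        refine ⟨by simpa [Fin.castSucc_inj] using huv, ?_, ?_⟩
        · rw [hy, BB_cs_cs, if_neg hcase]; exact hpos
        · rw [hy, BB_cs_cs, if_neg (by tauto)]; exact hpos'
  have key : ∀ i : Fin (n + 1), (suppGraph y).Reachable i (Fin.last n) := by
    intro i
    induction i using Fin.lastCases with
    | last => exact SimpleGraph.Reachable.refl _
    | cast i =>
      obtain ⟨p⟩ := supp_preconnected hx i a
      exact (htrans i a p).trans hadj_a.reachable
  intro i j
  exact (key i).trans (key j).symm

lemma tourCost_nonneg {N : ℕ} {c : Fin N → Fin N → ℝ} (hc : ∀ i j, 0 ≤ c i j)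
    (σ : Equiv.Perm (Fin N)) : 0 ≤ tourCost N c σ :=
  Finset.sum_nonneg fun i _ => hc _ _

lemma TSP_nonneg {N : ℕ} {c : Fin N → Fin N → ℝ} (hc : ∀ i j, 0 ≤ c i j) :
    0 ≤ TSP N c :=
  Real.sInf_nonneg (by rintro r ⟨σ, rfl⟩; exact tourCost_nonneg hc σ)

lemma TSP_le_tourCost {N : ℕ} {c : Fin N → Fin N → ℝ} (hc : ∀ i j, 0 ≤ c i j)
    (σ : Equiv.Perm (Fin N)) : TSP N c ≤ tourCost N c σ :=
  csInf_le ⟨0, by rintro r ⟨σ', rfl⟩; exact tourCost_nonneg hc σ'⟩ ⟨σ, rfl⟩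

lemma gapset_bddAbove {N : ℕ} (y : Fin N → Fin N → ℝ)
    (hnn : ∀ i j, 0 ≤ y i j)
    (hconn : (suppGraph y).Preconnected)
    (hpos : ∃ p : Fin N × Fin N, 0 < y p.1 p.2) :
    BddAbove {r | ∃ c, IsMetric N c ∧ 0 < dotE N c y ∧ r = TSP N c / dotE N c y} := by
  classical
  set F := (Finset.univ.filter fun p : Fin N × Fin N => 0 < y p.1 p.2) with hF
  have hFne : F.Nonempty := ⟨hpos.choose, by simp [hF]; exact hpos.choose_spec⟩
  set m := F.inf' hFne (fun p => y p.1 p.2) with hm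
  have hmpos : 0 < m :=
    (Finset.lt_inf'_iff hFne).2 (fun p hp => (Finset.mem_filter.1 hp).2)
  refine ⟨2 * N / m, ?_⟩
  rintro r ⟨c, hc, hd, rfl⟩
  have hcnn : ∀ i j, 0 ≤ c i j := hc.2.2.1
  -- edge bound
  have key : ∀ u v : Fin N, c u v ≤ (2 * dotE N c y) / m := by
    intro u v
    obtain ⟨p⟩ := hconn u v
    refine (metric_le_dartSum hc p.bypass).trans ?_
    have hpath : p.bypass.IsPath := SimpleGraph.Walk.bypass_isPath p
    have hdnodup : p.bypass.darts.Nodup :=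
      List.Nodup.of_map SimpleGraph.Dart.edge hpath.isTrail.edges_nodup
    have hmem : ∀ d ∈ p.bypass.darts, m ≤ y d.toProd.1 d.toProd.2 := by
      intro d _
      exact Finset.inf'_le (fun p : Fin N × Fin N => y p.1 p.2)
        (Finset.mem_filter.2 ⟨Finset.mem_univ d.toProd, d.adj.2.1⟩)
    have step1 : (p.bypass.darts.map fun d => c d.toProd.1 d.toProd.2).sum
        ≤ (p.bypass.darts.map fun d =>
            c d.toProd.1 d.toProd.2 * y d.toProd.1 d.toProd.2 / m).sum := by
      apply List.sum_le_sum
      intro d hd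
      rw [le_div_iff₀ hmpos]
      have := hmem d hd
      nlinarith [hcnn d.toProd.1 d.toProd.2, hnn d.toProd.1 d.toProd.2]
    refine step1.trans ?_
    -- convert to a finset sum over distinct pairs
    set l := p.bypass.darts.map SimpleGraph.Dart.toProd with hl
    have hlnodup : l.Nodup := hdnodup.map SimpleGraph.Dart.toProd_injective
    have heq : (p.bypass.darts.map fun d =>
        c d.toProd.1 d.toProd.2 * y d.toProd.1 d.toProd.2 / m).sum
        = (l.map fun q => c q.1 q.2 * y q.1 q.2 / m).sum := by
      rw [hl, List.map_map]; rfl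
    rw [heq, ← List.sum_toFinset _ hlnodup]
    have hsub : l.toFinset ⊆ (Finset.univ : Finset (Fin N × Fin N)) := Finset.subset_univ _
    have hstep2 : ∑ q ∈ l.toFinset, c q.1 q.2 * y q.1 q.2 / m
        ≤ ∑ q : Fin N × Fin N, c q.1 q.2 * y q.1 q.2 / m := by
      apply Finset.sum_le_sum_of_subset_of_nonneg hsub
      intro q _ _
      have := hcnn q.1 q.2; have := hnn q.1 q.2
      positivity
    refine hstep2.trans ?_
    rw [← Finset.sum_div]
    apply div_le_div_of_nonneg_right ?_ hmpos.le
    rw [Fintype.sum_prod_type]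
    have : dotE N c y = (∑ i, ∑ j, c i j * y i j) / 2 := rfl
    rw [this]; ring_nf; exact le_refl _
  -- tour bound
  have htour : TSP N c ≤ N * ((2 * dotE N c y) / m) := by
    refine (TSP_le_tourCost hcnn 1).trans ?_
    unfold tourCost
    calc ∑ i : Fin N, c ((1 : Equiv.Perm (Fin N)) i) ((1 : Equiv.Perm (Fin N)) (finRotate N i))
        ≤ ∑ _i : Fin N, (2 * dotE N c y) / m := Finset.sum_le_sum fun i _ => key _ _
    _ = N * ((2 * dotE N c y) / m) := by rw [Finset.sum_const, Finset.card_univ, Fintype.card_fin, nsmul_eq_mul]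
  rw [div_le_iff₀ hd]
  calc TSP N c ≤ N * ((2 * dotE N c y) / m) := htour
  _ = 2 * N / m * dotE N c y := by field_simp

lemma EC_cs_cs {n : ℕ} (c : Fin n → Fin n → ℝ) (b : Fin n) (i j : Fin n) :
    extendCost c b i.castSucc j.castSucc = c i j := by
  unfold extendCost
  rw [dif_neg (Fin.castSucc_lt_last i).ne, dif_neg (Fin.castSucc_lt_last j).ne]
  simp

lemma EC_cs_last {n : ℕ} (c : Fin n → Fin n → ℝ) (b : Fin n) (i : Fin n) :
    extendCost c b i.castSucc (Fin.last n) = c i b := by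
  unfold extendCost
  rw [dif_neg (Fin.castSucc_lt_last i).ne, dif_pos rfl]
  simp

lemma EC_last_cs {n : ℕ} (c : Fin n → Fin n → ℝ) (b : Fin n) (j : Fin n) :
    extendCost c b (Fin.last n) j.castSucc = c j b := by
  unfold extendCost
  rw [dif_pos rfl, dif_neg (Fin.castSucc_lt_last j).ne]
  simp

lemma EC_last_last {n : ℕ} (c : Fin n → Fin n → ℝ) (b : Fin n) :
    extendCost c b (Fin.last n) (Fin.last n) = 0 := by
  unfold extendCost; rw [dif_pos rfl, dif_pos rfl]

lemma extend_metric {n : ℕ} {c : Fin n → Fin n → ℝ} (hc : IsMetric n c) (b : Fin n) :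
    IsMetric (n + 1) (extendCost c b) := by
  obtain ⟨hs, hd, hnn, -⟩ := id hc
  refine ⟨?_, ?_, ?_, ?_⟩
  · intro i j
    induction i using Fin.lastCases with
    | last => induction j using Fin.lastCases with
      | last => rfl
      | cast j => rw [EC_last_cs, EC_cs_last]
    | cast i => induction j using Fin.lastCases with
      | last => rw [EC_last_cs, EC_cs_last]
      | cast j => rw [EC_cs_cs, EC_cs_cs, hs]
  · intro i
    induction i using Fin.lastCases with
    | last => exact EC_last_last c b
    | cast i => rw [EC_cs_cs]; exact hd i
  · intro i j
    induction i using Fin.lastCases with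
    | last => induction j using Fin.lastCases with
      | last => rw [EC_last_last]
      | cast j => rw [EC_last_cs]; exact hnn j b
    | cast i => induction j using Fin.lastCases with
      | last => rw [EC_cs_last]; exact hnn i b
      | cast j => rw [EC_cs_cs]; exact hnn i j
  · intro i j k _ _ _
    induction i using Fin.lastCases with
    | last => induction j using Fin.lastCases with
      | last => induction k using Fin.lastCases with
        | last => simp only [EC_last_last]; norm_num
        | cast k => simp only [EC_last_last, EC_last_cs, EC_cs_last]; linarith [hnn k b]
      | cast j => induction k using Fin.lastCases with
        | last => simp only [EC_last_cs, EC_last_last]; linarith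
        | cast k => simp only [EC_last_cs, EC_cs_cs]
                    have := tri' hc j b k
                    rw [hs j k] at this; linarith
    | cast i => induction j using Fin.lastCases with
      | last => induction k using Fin.lastCases with
        | last => simp only [EC_cs_last, EC_last_last]; linarith
        | cast k => simp only [EC_cs_last, EC_cs_cs]; exact tri' hc i b k
      | cast j => induction k using Fin.lastCases with
        | last => simp only [EC_cs_cs, EC_cs_last, EC_last_cs]
                  have := tri' hc i j b
                  rw [hs b j] at this; linarith
        | cast k => simp only [EC_cs_cs]; exact tri' hc i j k

lemma dotE_extend {n : ℕ} {c x : Fin n → Fin n → ℝ} (hc : IsMetric n c)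
    (hxs : ∀ i j, x i j = x j i) {a b : Fin n} (hab : a ≠ b) (h1 : x a b = 1) :
    dotE (n + 1) (extendCost c b) (BB x a b) = dotE n c x := by
  classical
  have hbb : c b b = 0 := hc.2.1 b
  unfold dotE
  congr 1
  rw [Fin.sum_univ_castSucc]
  have hfirstsplit : ∀ i : Fin n,
      ∑ j : Fin (n+1), extendCost c b i.castSucc j * BB x a b i.castSucc j
        = (∑ j : Fin n, c i j * (if (i = a ∧ j = b) ∨ (i = b ∧ j = a) then 0 else x i j))
          + c i b * (if i = a ∨ i = b then 1 else 0) := by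
    intro i
    rw [Fin.sum_univ_castSucc]
    simp only [EC_cs_cs, EC_cs_last, BB_cs_cs, BB_cs_last]
  have hmid : ∑ i : Fin n, c i b * (if i = a ∨ i = b then (1:ℝ) else 0) = c a b := by
    have hterm : ∀ i : Fin n,
        c i b * (if i = a ∨ i = b then (1:ℝ) else 0)
        = (if i = a then c a b else 0) + (if i = b then c b b else 0) := by
      intro i
      by_cases hia : i = a
      · subst hia; simp [hab]
      · by_cases hib : i = b
        · subst hib; simp [hia]
        · simp [hia, hib]
    rw [Finset.sum_congr rfl (fun i _ => hterm i), Finset.sum_add_distrib,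
      Finset.sum_ite_eq' Finset.univ a (fun _ => c a b),
      Finset.sum_ite_eq' Finset.univ b (fun _ => c b b)]
    simp [hbb]
  have hlast : ∑ j : Fin (n+1), extendCost c b (Fin.last n) j * BB x a b (Fin.last n) j
      = c a b := by
    rw [Fin.sum_univ_castSucc]
    simp only [EC_last_cs, EC_last_last, BB_last, zero_mul, Fin.castSucc_inj, add_zero]
    exact hmid
  rw [Finset.sum_congr rfl (fun i _ => hfirstsplit i), hlast, Finset.sum_add_distrib, hmid]
  -- main double sum
  have hmain : ∑ i : Fin n, ∑ j : Fin n,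
      c i j * (if (i = a ∧ j = b) ∨ (i = b ∧ j = a) then (0:ℝ) else x i j)
      = (∑ i, ∑ j, c i j * x i j) - 2 * c a b := by
    rw [← Fintype.sum_prod_type (f := fun p : Fin n × Fin n =>
      c p.1 p.2 * (if (p.1 = a ∧ p.2 = b) ∨ (p.1 = b ∧ p.2 = a) then (0:ℝ) else x p.1 p.2)),
      ← Fintype.sum_prod_type (f := fun p : Fin n × Fin n => c p.1 p.2 * x p.1 p.2)]
    set T : Finset (Fin n × Fin n) := {(a, b), (b, a)} with hT
    have habne : ((a, b) : Fin n × Fin n) ≠ (b, a) := by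
      simp [Prod.ext_iff]; intro h; exact absurd h hab
    have hTsub : T ⊆ Finset.univ := Finset.subset_univ T
    rw [← Finset.sum_sdiff hTsub, ← Finset.sum_sdiff hTsub
      (f := fun p : Fin n × Fin n => c p.1 p.2 * x p.1 p.2)]
    have hTzero : ∑ p ∈ T, c p.1 p.2 *
        (if (p.1 = a ∧ p.2 = b) ∨ (p.1 = b ∧ p.2 = a) then (0:ℝ) else x p.1 p.2) = 0 := by
      apply Finset.sum_eq_zero
      intro p hp
      rw [hT] at hp
      simp only [Finset.mem_insert, Finset.mem_singleton] at hp
      rcases hp with rfl | rfl <;> simp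
    have hTval : ∑ p ∈ T, c p.1 p.2 * x p.1 p.2 = 2 * c a b := by
      rw [hT, Finset.sum_insert (by simp [habne]), Finset.sum_singleton]
      simp only
      rw [h1, hxs b a, h1, hc.1 b a]
      ring
    have hoff : ∀ p ∈ Finset.univ \ T, c p.1 p.2 *
        (if (p.1 = a ∧ p.2 = b) ∨ (p.1 = b ∧ p.2 = a) then (0:ℝ) else x p.1 p.2)
        = c p.1 p.2 * x p.1 p.2 := by
      intro p hp
      rw [Finset.mem_sdiff] at hp
      have : ¬((p.1 = a ∧ p.2 = b) ∨ (p.1 = b ∧ p.2 = a)) := by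
        intro h
        apply hp.2
        rw [hT]
        rcases h with ⟨h1', h2'⟩ | ⟨h1', h2'⟩
        · simp [Prod.ext_iff, h1', h2']
        · simp [Prod.ext_iff, h1', h2']
      rw [if_neg this]
    rw [Finset.sum_congr rfl hoff, hTzero, hTval]
    ring
  rw [hmain]
  ring

lemma cs_add_one {m : ℕ} (i : Fin (m + 1)) (h : i ≠ Fin.last m) :
    (i.castSucc : Fin (m + 2)) + 1 = (i + 1).castSucc := by
  apply Fin.ext
  rw [Fin.val_add_one, if_neg (Fin.castSucc_lt_last i).ne, Fin.coe_castSucc,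
    Fin.coe_castSucc, Fin.val_add_one, if_neg h]

lemma cs_last_add_one {m : ℕ} :
    ((Fin.last m).castSucc : Fin (m + 2)) + 1 = Fin.last (m + 1) := by
  apply Fin.ext
  rw [Fin.val_add_one, if_neg (Fin.castSucc_lt_last _).ne, Fin.coe_castSucc,
    Fin.val_last, Fin.val_last]

lemma last_add_one' {m : ℕ} :
    (Fin.last (m + 1) : Fin (m + 2)) + 1 = ((0 : Fin (m + 1))).castSucc := by
  rw [Fin.last_add_one, Fin.castSucc_zero]

lemma tsp_mono {m : ℕ} {c : Fin (m + 1) → Fin (m + 1) → ℝ}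
    (hc : IsMetric (m + 1) c) (b : Fin (m + 1)) :
    TSP (m + 1) c ≤ TSP (m + 2) (extendCost c b) := by
  classical
  set c' := extendCost c b with hc'def
  refine le_csInf ⟨tourCost (m + 2) c' 1, 1, rfl⟩ ?_
  rintro r ⟨σ', rfl⟩
  -- rotate σ' so that it fixes the last node
  set e : Fin (m + 2) := σ'⁻¹ (Fin.last (m + 1)) - Fin.last (m + 1) with he
  set τ : Equiv.Perm (Fin (m + 2)) := (Equiv.addRight e).trans σ' with hτdef
  have hτ : τ (Fin.last (m + 1)) = Fin.last (m + 1) := by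
    have : Fin.last (m + 1) + e = σ'⁻¹ (Fin.last (m + 1)) := by
      rw [he]; abel
    simp only [hτdef, Equiv.trans_apply, Equiv.coe_addRight]
    rw [this, Equiv.Perm.coe_inv, Equiv.apply_symm_apply]
  have hrot : tourCost (m + 2) c' τ = tourCost (m + 2) c' σ' := by
    unfold tourCost
    refine Fintype.sum_equiv (Equiv.addRight e)
      (fun i => c' (τ i) (τ (finRotate (m + 2) i)))
      (fun i => c' (σ' i) (σ' (finRotate (m + 2) i))) ?_
    intro i
    simp only [hτdef, Equiv.trans_apply, Equiv.coe_addRight, finRotate_succ_apply]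
    congr 2
    exact add_right_comm _ _ _
  rw [← hrot]
  -- restriction of τ to Fin (m+1)
  have hτinv : τ⁻¹ (Fin.last (m + 1)) = Fin.last (m + 1) := by
    conv_lhs => rw [← hτ]
    rw [Equiv.Perm.coe_inv, Equiv.symm_apply_apply]
  have hne : ∀ i : Fin (m + 1), τ i.castSucc ≠ Fin.last (m + 1) := by
    intro i h
    have := τ.injective (h.trans hτ.symm)
    exact (Fin.castSucc_lt_last i).ne this
  have hne' : ∀ i : Fin (m + 1), τ⁻¹ i.castSucc ≠ Fin.last (m + 1) := by
    intro i h
    have := τ⁻¹.injective (h.trans hτinv.symm)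
    exact (Fin.castSucc_lt_last i).ne this
  set σ : Equiv.Perm (Fin (m + 1)) :=
    { toFun := fun i => (τ i.castSucc).castPred (hne i)
      invFun := fun i => (τ⁻¹ i.castSucc).castPred (hne' i)
      left_inv := by
        intro i
        refine Fin.castSucc_injective _ ?_
        rw [Fin.castSucc_castPred, Fin.castSucc_castPred, Equiv.Perm.coe_inv, Equiv.symm_apply_apply]
      right_inv := by
        intro i
        refine Fin.castSucc_injective _ ?_
        rw [Fin.castSucc_castPred, Fin.castSucc_castPred, Equiv.Perm.coe_inv, Equiv.apply_symm_apply] } with hσdef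
  have hσcs : ∀ i : Fin (m + 1), τ i.castSucc = (σ i).castSucc := by
    intro i
    rw [hσdef]
    simp only [Equiv.coe_fn_mk]
    rw [Fin.castSucc_castPred]
  refine le_trans (csInf_le ⟨0, ?_⟩ ⟨σ, rfl⟩) ?_
  · rintro r ⟨σ₀, rfl⟩; exact tourCost_nonneg hc.2.2.1 σ₀
  -- compare tourCost σ with tourCost τ
  unfold tourCost
  rw [Fin.sum_univ_castSucc
    (f := fun i : Fin (m + 2) => c' (τ i) (τ (finRotate (m + 2) i)))]
  set L : Fin (m + 1) := Fin.last m with hL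
  have hsum_eq : ∀ i ∈ Finset.univ.erase L,
      c (σ i) (σ (finRotate (m + 1) i)) = c' (τ i.castSucc) (τ (finRotate (m + 2) i.castSucc)) := by
    intro i hi
    have hiL : i ≠ L := (Finset.mem_erase.1 hi).1
    rw [finRotate_succ_apply, finRotate_succ_apply, cs_add_one i hiL,
      hσcs i, hσcs (i + 1), hc'def, EC_cs_cs]
  rw [← Finset.sum_erase_add Finset.univ _ (Finset.mem_univ L),
    ← Finset.sum_erase_add Finset.univ
      (fun i : Fin (m + 1) => c' (τ i.castSucc) (τ (finRotate (m + 2) i.castSucc)))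
      (Finset.mem_univ L),
    Finset.sum_congr rfl hsum_eq]
  have hlast_term : c (σ L) (σ (finRotate (m + 1) L))
      ≤ c' (τ L.castSucc) (τ (finRotate (m + 2) L.castSucc))
        + c' (τ (Fin.last (m + 1))) (τ (finRotate (m + 2) (Fin.last (m + 1)))) := by
    rw [finRotate_succ_apply, finRotate_succ_apply, finRotate_succ_apply,
      hL, Fin.last_add_one, cs_last_add_one, hτ, last_add_one',
      hσcs (Fin.last m), hσcs 0, hc'def, EC_cs_last, EC_last_cs]
    have := tri' hc (σ (Fin.last m)) (σ 0) b
    rw [hc.1 b (σ 0)] at this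
    linarith
  linarith [hlast_term]

/-- The BB-move is `Gap⁺`-increasing: for every `n ≥ 3`, every
vertex `x` of `P_SEP(n)` and every `1`-edge `ab` of `x`,
`Gap⁺(BB(x, ab)) ≥ Gap⁺(x)`. -/
theorem bb_move_gapPlus_increasing (n : ℕ) (hn : 3 ≤ n)
    (x : Fin n → Fin n → ℝ) (hx : IsVertex n x)
    (a b : Fin n) (hab : a ≠ b) (h1 : x a b = 1) :
    GapPlus n x ≤ GapPlus (n + 1) (BB x a b) := by
  classical
  have hxP : InPSEP n x := hx.1
  have hxs : ∀ i j, x i j = x j i := hxP.1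
  have hxnn : ∀ i j, 0 ≤ x i j := fun i j => (hxP.2.2.2.2 i j).1
  set y := BB x a b with hy
  have hynn : ∀ i j, 0 ≤ y i j := fun i j => BB_nonneg hxnn a b i j
  have hyconn : (suppGraph y).Preconnected := BB_preconnected hxP hab h1
  have hypos : ∃ p : Fin (n + 1) × Fin (n + 1), 0 < y p.1 p.2 :=
    ⟨(a.castSucc, Fin.last n), by rw [hy, BB_cs_last]; simp⟩
  have hBdd := gapset_bddAbove y hynn hyconn hypos
  unfold GapPlus
  apply Real.sSup_le
  · rintro r ⟨c, hc, hpos, rfl⟩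
    have hc' : IsMetric (n + 1) (extendCost c b) := extend_metric hc b
    have hdot : dotE (n + 1) (extendCost c b) y = dotE n c x := by
      rw [hy]; exact dotE_extend hc hxs hab h1
    have hTSP : TSP n c ≤ TSP (n + 1) (extendCost c b) := by
      obtain ⟨m, rfl⟩ : ∃ m, n = m + 1 := ⟨n - 1, by omega⟩
      exact tsp_mono hc b
    have hmem : TSP (n + 1) (extendCost c b) / dotE (n + 1) (extendCost c b) y
        ∈ {r | ∃ c', IsMetric (n + 1) c' ∧ 0 < dotE (n + 1) c' y ∧
            r = TSP (n + 1) c' / dotE (n + 1) c' y} :=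
      ⟨extendCost c b, hc', by rw [hdot]; exact hpos, rfl⟩
    calc TSP n c / dotE n c x ≤ TSP (n + 1) (extendCost c b) / dotE n c x :=
          div_le_div_of_nonneg_right hTSP (le_of_lt hpos)
    _ = TSP (n + 1) (extendCost c b) / dotE (n + 1) (extendCost c b) y := by rw [hdot]
    _ ≤ sSup {r | ∃ c', IsMetric (n + 1) c' ∧ 0 < dotE (n + 1) c' y ∧
            r = TSP (n + 1) c' / dotE (n + 1) c' y} := le_csSup hBdd hmem
  · apply Real.sSup_nonneg
    rintro r ⟨c, hc, hpos, rfl⟩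
    exact div_nonneg (TSP_nonneg hc.2.2.1) (le_of_lt hpos)
end

section
/- For every vertex x of P_SEP(n), the two linear programs DOPTI(x) and DOPT⁺(x) have the same optimal value: DOPTI(x) = DOPT⁺(x). -/
open Finset

section MyAux
variable {n : ℕ}

theorem myCountP_eq_sum {α : Type*} (pr : α → Bool) (l : List α) :
    l.countP pr = (l.map fun a => if pr a then 1 else 0).sum := by
  induction l with
  | nil => simp
  | cons a l ih => by_cases h : pr a <;> simp [List.countP_cons, ih, h, Nat.add_comm]

theorem myCountP_ofFn {α : Type*} {m : ℕ} (h : Fin m → α) (pr : α → Bool) :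
    (List.ofFn h).countP pr = (Finset.univ.filter fun k => pr (h k) = true).card := by
  rw [myCountP_eq_sum, List.map_ofFn, List.sum_ofFn, Finset.card_filter]
  simp [Function.comp]

theorem myZip_ofFn {α β : Type*} {m : ℕ} (f : Fin m → α) (g : Fin m → β) :
    (List.ofFn f).zip (List.ofFn g) = List.ofFn (fun k => (f k, g k)) := by
  apply List.ext_getElem <;> simp

theorem myOfFn_rotate_one {α : Type*} {m : ℕ} (f : Fin m → α) :
    (List.ofFn f).rotate 1 = List.ofFn (fun k => f (finRotate m k)) := by
  cases m with
  | zero => simp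
  | succ m =>
    apply List.ext_getElem
    · simp
    · intro i h1 h2
      rw [List.getElem_rotate]
      simp only [List.getElem_ofFn]
      congr 1
      simp only [List.length_ofFn] at h1 ⊢
      rw [finRotate_succ_apply]
      ext
      simp [Fin.add_def, Nat.mod_eq_of_lt (show i < m + 1 by simpa [List.length_ofFn] using h2)]

theorem myZip_rotate {α β : Type*} (a : List α) (b : List β) (hl : a.length = b.length) (m : ℕ) :
    (a.rotate m).zip (b.rotate m) = (a.zip b).rotate m := by
  apply List.ext_getElem
  · simp [hl]
  · intro i h1 h2
    rw [List.getElem_zip, List.getElem_rotate, List.getElem_rotate, List.getElem_rotate,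
      List.getElem_zip]
    simp [hl]

theorem cyclicPairs_rotate (p : List (Fin n)) (m : ℕ) :
    cyclicPairs (p.rotate m) = (cyclicPairs p).rotate m := by
  unfold cyclicPairs
  rw [List.rotate_rotate, Nat.add_comm m 1, ← List.rotate_rotate,
    myZip_rotate _ _ (by simp)]

theorem multE_rotate (p : List (Fin n)) (m : ℕ) (i j : Fin n) :
    multE (p.rotate m) i j = multE p i j := by
  unfold multE
  rw [cyclicPairs_rotate]
  exact (List.rotate_perm _ _).countP_eq _

theorem cyclicPairs_cons (x : Fin n) (xs : List (Fin n)) :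
    cyclicPairs (x :: xs) = (x :: xs).zip (xs ++ [x]) := by
  unfold cyclicPairs
  rw [show (1:ℕ) = 0 + 1 from rfl, List.rotate_cons_succ, List.rotate_zero]

theorem multE_ofFn (σ : Equiv.Perm (Fin n)) (i j : Fin n) :
    multE (List.ofFn ⇑σ) i j = tourMult n σ i j := by
  unfold multE tourMult
  rw [show cyclicPairs (List.ofFn ⇑σ)
      = List.ofFn (fun k => (σ k, σ (finRotate n k))) by
    unfold cyclicPairs
    rw [myOfFn_rotate_one, myZip_ofFn]]
  rw [myCountP_ofFn]
  congr 1
  ext k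
  simp

theorem tourMult_le_two (σ : Equiv.Perm (Fin n)) (i j : Fin n) :
    tourMult n σ i j ≤ 2 := by
  unfold tourMult
  calc (Finset.univ.filter fun k : Fin n =>
      (σ k = i ∧ σ (finRotate n k) = j) ∨ (σ k = j ∧ σ (finRotate n k) = i)).card
      ≤ ({σ⁻¹ i, σ⁻¹ j} : Finset (Fin n)).card := by
        apply Finset.card_le_card
        intro k hk
        simp only [Finset.mem_filter] at hk
        rcases hk.2 with ⟨h1, _⟩ | ⟨h1, _⟩ <;>
          simp [← h1, Finset.mem_insert]
    _ ≤ 2 := Finset.card_insert_le _ _ |>.trans (by simp)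

theorem isHamWalk_ofFn (hn : 3 ≤ n) (σ : Equiv.Perm (Fin n)) :
    IsHamWalk (fun i j : Fin n => i ≠ j) (List.ofFn ⇑σ) := by
  have hne : (List.ofFn ⇑σ) ≠ [] := by
    apply List.ne_nil_of_length_pos; simp; omega
  refine ⟨hne, ?_, ?_, ?_⟩
  · intro v
    rw [List.mem_ofFn]
    exact ⟨σ⁻¹ v, by simp⟩
  · intro q hq
    rw [show cyclicPairs (List.ofFn ⇑σ)
        = List.ofFn (fun k => (σ k, σ (finRotate n k))) by
      unfold cyclicPairs
      rw [myOfFn_rotate_one, myZip_ofFn]] at hq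
    rw [List.mem_ofFn] at hq
    obtain ⟨k, hk⟩ := hq
    rw [← hk]
    simp only [ne_eq, EmbeddingLike.apply_eq_iff_eq]
    intro hkk
    have : finRotate n k ≠ k := by
      rcases n with _ | m
      · exact absurd hn (by omega)
      · rw [finRotate_succ_apply]
        intro h
        have : (1 : Fin (m+1)) = 0 := by
          have := congrArg (fun z => z - k) h
          simpa [add_comm] using this
        have hm : 2 ≤ m + 1 := by omega
        rw [Fin.one_eq_zero_iff] at this
        omega
    exact this hkk.symm
  · intro i j
    rw [multE_ofFn]
    exact tourMult_le_two σ i j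

end MyAux

section MyAux2
variable {n : ℕ}

theorem lamTerm_zero (i j : Fin n) :
    lamTerm n (fun _ _ _ => (0:ℝ)) i j = 0 := by
  unfold lamTerm; simp

theorem lamTerm_add_sum {γ : Type*} (s : Finset γ) (lam : Fin n → Fin n → Fin n → ℝ)
    (c : γ → ℝ) (Λ : γ → Fin n → Fin n → Fin n → ℝ) (i j : Fin n) :
    lamTerm n (fun u v w => lam u v w + ∑ p ∈ s, c p * Λ p u v w) i j
      = lamTerm n lam i j + ∑ p ∈ s, c p * lamTerm n (Λ p) i j := by
  unfold lamTerm
  have : ∀ p ∈ s, c p * ∑ k ∈ ({i, j} : Finset (Fin n))ᶜ, (-Λ p i j k + Λ p i k j + Λ p j k i)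
      = ∑ k ∈ ({i, j} : Finset (Fin n))ᶜ, c p * (-Λ p i j k + Λ p i k j + Λ p j k i) := by
    intro p _; rw [Finset.mul_sum]
  rw [Finset.sum_congr rfl this, Finset.sum_comm, ← Finset.sum_add_distrib]
  apply Finset.sum_congr rfl
  intro k _
  simp only [mul_add, mul_neg, Finset.sum_add_distrib, Finset.sum_neg_distrib]
  ring

/-- The triangle move `λ`-vector: supported on the triple with edge `{a,c}` and apex `b`. -/
noncomputable def triLam (a b c : Fin n) : Fin n → Fin n → Fin n → ℝ :=
  fun u v w => if ((u = a ∧ v = c) ∨ (u = c ∧ v = a)) ∧ w = b then 1 else 0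

theorem triLam_lamOK (a b c : Fin n) (hab : a ≠ b) (hbc : b ≠ c) (hac : a ≠ c) :
    LamOK n (triLam a b c) := by
  refine ⟨fun u v w => by unfold triLam; positivity, fun u v w => by
    unfold triLam; congr 1; simp only [eq_iff_iff]; tauto, fun u v w h => by
    unfold triLam
    rw [if_neg]
    rintro ⟨⟨h1,h2⟩|⟨h1,h2⟩, rfl⟩ <;> subst h1 <;> subst h2 <;>
      rcases h with h|h|h <;> simp_all⟩

end MyAux2

section MyAux3
variable {n : ℕ}

theorem lamTerm_triLam (a b c : Fin n) (hab : a ≠ b) (hbc : b ≠ c) (hac : a ≠ c)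
    (i j : Fin n) (hij : i ≠ j) :
    lamTerm n (triLam a b c) i j =
      (if (a = i ∧ c = j) ∨ (a = j ∧ c = i) then (-1:ℝ) else 0)
      + (if (a = i ∧ b = j) ∨ (a = j ∧ b = i) then (1:ℝ) else 0)
      + (if (b = i ∧ c = j) ∨ (b = j ∧ c = i) then (1:ℝ) else 0) := by
  classical
  unfold lamTerm
  set K := (({i, j} : Finset (Fin n)))ᶜ with hK
  have hmem : ∀ k : Fin n, k ∈ K ↔ (k ≠ i ∧ k ≠ j) := by
    intro k; simp [hK]
  rw [Finset.sum_add_distrib, Finset.sum_add_distrib, Finset.sum_neg_distrib]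
  have h1 : ∑ k ∈ K, triLam a b c i j k
      = (if (i = a ∧ j = c) ∨ (i = c ∧ j = a) then (1:ℝ) else 0) := by
    unfold triLam
    by_cases hP : (i = a ∧ j = c) ∨ (i = c ∧ j = a)
    · have hbK : b ∈ K := by
        rw [hmem]
        rcases hP with ⟨rfl, rfl⟩ | ⟨rfl, rfl⟩
        · exact ⟨fun h => hab h.symm, fun h => hbc h⟩
        · exact ⟨fun h => hbc h, fun h => hab h.symm⟩
      simp only [hP, true_and]
      rw [Finset.sum_ite_eq' K b (fun _ => (1:ℝ)), if_pos hbK]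
      simp [hP]
    · simp only [hP, false_and, if_false, Finset.sum_const_zero, if_neg hP]
  have h2 : ∑ k ∈ K, triLam a b c i k j
      = (if (i = a ∧ j = b) then (1:ℝ) else 0) + (if (i = c ∧ j = b) then (1:ℝ) else 0) := by
    unfold triLam
    by_cases hj : j = b
    · by_cases hi : i = a
      · have hcond : ∀ k, (((i = a ∧ k = c) ∨ (i = c ∧ k = a)) ∧ j = b) ↔ k = c := by
          intro k
          constructor
          · rintro ⟨⟨_, rfl⟩ | ⟨h1, _⟩, _⟩
            · rfl
            · exact absurd (hi ▸ h1) hac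
          · intro hkc; exact ⟨Or.inl ⟨hi, hkc⟩, hj⟩
        have heq : ∑ k ∈ K, (if ((i = a ∧ k = c) ∨ (i = c ∧ k = a)) ∧ j = b then (1:ℝ) else 0)
            = ∑ k ∈ K, (if k = c then (1:ℝ) else 0) := by
          apply Finset.sum_congr rfl; intro k _; rw [if_congr (hcond k) rfl rfl]
        rw [heq, Finset.sum_ite_eq' K c (fun _ => (1:ℝ))]
        have hcK : c ∈ K := by
          rw [hmem]
          constructor
          · intro h; exact hac (h.trans hi).symm
          · intro h; exact hbc (h.trans hj).symm
        rw [if_pos hcK, if_pos ⟨hi, hj⟩,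
          if_neg (show ¬(i = c ∧ j = b) by rintro ⟨h1, _⟩; exact hac (hi.symm.trans h1)),
          add_zero]
      · by_cases hi2 : i = c
        · have hcond : ∀ k, (((i = a ∧ k = c) ∨ (i = c ∧ k = a)) ∧ j = b) ↔ k = a := by
            intro k
            constructor
            · rintro ⟨⟨h1, _⟩ | ⟨_, rfl⟩, _⟩
              · exact absurd h1 hi
              · rfl
            · intro hka; exact ⟨Or.inr ⟨hi2, hka⟩, hj⟩
          have heq : ∑ k ∈ K, (if ((i = a ∧ k = c) ∨ (i = c ∧ k = a)) ∧ j = b then (1:ℝ) else 0)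
              = ∑ k ∈ K, (if k = a then (1:ℝ) else 0) := by
            apply Finset.sum_congr rfl; intro k _; rw [if_congr (hcond k) rfl rfl]
          rw [heq, Finset.sum_ite_eq' K a (fun _ => (1:ℝ))]
          have haK : a ∈ K := by
            rw [hmem]
            constructor
            · intro h; exact hac (h.trans hi2)
            · intro h; exact hab (h.trans hj)
          rw [if_pos haK, if_neg (show ¬(i = a ∧ j = b) by rintro ⟨h1, _⟩; exact hi h1),
            if_pos ⟨hi2, hj⟩, zero_add]
        · have hz : ∀ k ∈ K, (if ((i = a ∧ k = c) ∨ (i = c ∧ k = a)) ∧ j = b then (1:ℝ) else 0) = 0 := by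
            intro k _
            rw [if_neg]
            rintro ⟨⟨h1, _⟩ | ⟨h1, _⟩, _⟩
            · exact hi h1
            · exact hi2 h1
          rw [Finset.sum_congr rfl hz, Finset.sum_const_zero,
            if_neg (show ¬(i = a ∧ j = b) by rintro ⟨h1, _⟩; exact hi h1),
            if_neg (show ¬(i = c ∧ j = b) by rintro ⟨h1, _⟩; exact hi2 h1)]
          norm_num
    · have hz : ∀ k ∈ K, (if ((i = a ∧ k = c) ∨ (i = c ∧ k = a)) ∧ j = b then (1:ℝ) else 0) = 0 := by
        intro k _; rw [if_neg]; rintro ⟨_, h⟩; exact hj h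
      rw [Finset.sum_congr rfl hz, Finset.sum_const_zero,
        if_neg (show ¬(i = a ∧ j = b) by rintro ⟨_, h⟩; exact hj h),
        if_neg (show ¬(i = c ∧ j = b) by rintro ⟨_, h⟩; exact hj h)]
      norm_num
  have h3 : ∑ k ∈ K, triLam a b c j k i
      = (if (j = a ∧ i = b) then (1:ℝ) else 0) + (if (j = c ∧ i = b) then (1:ℝ) else 0) := by
    unfold triLam
    by_cases hj : i = b
    · by_cases hi : j = a
      · have hcond : ∀ k, (((j = a ∧ k = c) ∨ (j = c ∧ k = a)) ∧ i = b) ↔ k = c := by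
          intro k
          constructor
          · rintro ⟨⟨_, rfl⟩ | ⟨h1, _⟩, _⟩
            · rfl
            · exact absurd (hi ▸ h1) hac
          · intro hkc; exact ⟨Or.inl ⟨hi, hkc⟩, hj⟩
        have heq : ∑ k ∈ K, (if ((j = a ∧ k = c) ∨ (j = c ∧ k = a)) ∧ i = b then (1:ℝ) else 0)
            = ∑ k ∈ K, (if k = c then (1:ℝ) else 0) := by
          apply Finset.sum_congr rfl; intro k _; rw [if_congr (hcond k) rfl rfl]
        rw [heq, Finset.sum_ite_eq' K c (fun _ => (1:ℝ))]
        have hcK : c ∈ K := by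
          rw [hmem]
          constructor
          · intro h; exact hbc (h.trans hj).symm
          · intro h; exact hac (h.trans hi).symm
        rw [if_pos hcK, if_pos ⟨hi, hj⟩,
          if_neg (show ¬(j = c ∧ i = b) by rintro ⟨h1, _⟩; exact hac (hi.symm.trans h1)),
          add_zero]
      · by_cases hi2 : j = c
        · have hcond : ∀ k, (((j = a ∧ k = c) ∨ (j = c ∧ k = a)) ∧ i = b) ↔ k = a := by
            intro k
            constructor
            · rintro ⟨⟨h1, _⟩ | ⟨_, rfl⟩, _⟩
              · exact absurd h1 hi
              · rfl
            · intro hka; exact ⟨Or.inr ⟨hi2, hka⟩, hj⟩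
          have heq : ∑ k ∈ K, (if ((j = a ∧ k = c) ∨ (j = c ∧ k = a)) ∧ i = b then (1:ℝ) else 0)
              = ∑ k ∈ K, (if k = a then (1:ℝ) else 0) := by
            apply Finset.sum_congr rfl; intro k _; rw [if_congr (hcond k) rfl rfl]
          rw [heq, Finset.sum_ite_eq' K a (fun _ => (1:ℝ))]
          have haK : a ∈ K := by
            rw [hmem]
            constructor
            · intro h; exact hab (h.trans hj)
            · intro h; exact hac (h.trans hi2)
          rw [if_pos haK, if_neg (show ¬(j = a ∧ i = b) by rintro ⟨h1, _⟩; exact hi h1),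
            if_pos ⟨hi2, hj⟩, zero_add]
        · have hz : ∀ k ∈ K, (if ((j = a ∧ k = c) ∨ (j = c ∧ k = a)) ∧ i = b then (1:ℝ) else 0) = 0 := by
            intro k _
            rw [if_neg]
            rintro ⟨⟨h1, _⟩ | ⟨h1, _⟩, _⟩
            · exact hi h1
            · exact hi2 h1
          rw [Finset.sum_congr rfl hz, Finset.sum_const_zero,
            if_neg (show ¬(j = a ∧ i = b) by rintro ⟨h1, _⟩; exact hi h1),
            if_neg (show ¬(j = c ∧ i = b) by rintro ⟨h1, _⟩; exact hi2 h1)]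
          norm_num
    · have hz : ∀ k ∈ K, (if ((j = a ∧ k = c) ∨ (j = c ∧ k = a)) ∧ i = b then (1:ℝ) else 0) = 0 := by
        intro k _; rw [if_neg]; rintro ⟨_, h⟩; exact hj h
      rw [Finset.sum_congr rfl hz, Finset.sum_const_zero,
        if_neg (show ¬(j = a ∧ i = b) by rintro ⟨_, h⟩; exact hj h),
        if_neg (show ¬(j = c ∧ i = b) by rintro ⟨_, h⟩; exact hj h)]
      norm_num
  rw [h1, h2, h3]
  have c1 : (if (a = i ∧ c = j) ∨ (a = j ∧ c = i) then (-1:ℝ) else 0)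
      = -(if (i = a ∧ j = c) ∨ (i = c ∧ j = a) then (1:ℝ) else 0) := by
    have hiff : ((a = i ∧ c = j) ∨ (a = j ∧ c = i)) ↔ ((i = a ∧ j = c) ∨ (i = c ∧ j = a)) := by
      constructor <;> rintro (⟨rfl, rfl⟩ | ⟨rfl, rfl⟩) <;> simp
    rw [if_congr hiff rfl rfl]
    by_cases h : (i = a ∧ j = c) ∨ (i = c ∧ j = a) <;> simp [h]
  have split : ∀ (p q : Prop) [Decidable p] [Decidable q], ¬(p ∧ q) →
      (if p ∨ q then (1:ℝ) else 0) = (if p then 1 else 0) + (if q then 1 else 0) := by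
    intro p q _ _ hpq
    by_cases hp : p <;> by_cases hq : q <;> simp_all
  have c2 : (if (a = i ∧ b = j) ∨ (a = j ∧ b = i) then (1:ℝ) else 0)
      = (if (i = a ∧ j = b) then (1:ℝ) else 0) + (if (j = a ∧ i = b) then (1:ℝ) else 0) := by
    have hiff : ((a = i ∧ b = j) ∨ (a = j ∧ b = i)) ↔ ((i = a ∧ j = b) ∨ (j = a ∧ i = b)) := by
      constructor <;> rintro (⟨rfl, rfl⟩ | ⟨rfl, rfl⟩) <;> simp
    rw [if_congr hiff rfl rfl]
    apply split
    rintro ⟨⟨h1, _⟩, ⟨_, h2⟩⟩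
    exact hab (h1.symm.trans h2)
  have c3 : (if (b = i ∧ c = j) ∨ (b = j ∧ c = i) then (1:ℝ) else 0)
      = (if (i = c ∧ j = b) then (1:ℝ) else 0) + (if (j = c ∧ i = b) then (1:ℝ) else 0) := by
    have hiff : ((b = i ∧ c = j) ∨ (b = j ∧ c = i)) ↔ ((j = c ∧ i = b) ∨ (i = c ∧ j = b)) := by
      constructor <;> rintro (⟨rfl, rfl⟩ | ⟨rfl, rfl⟩) <;> simp
    rw [if_congr hiff rfl rfl]
    rw [split _ _ (by rintro ⟨⟨_, h1⟩, ⟨h2, _⟩⟩; exact hbc (h1.symm.trans h2))]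
    ring
  rw [c1, c2, c3]
  ring

end MyAux3

section MyAux4
variable {n : ℕ}

/-- closed-walk structure without the multiplicity bound -/
def Walkish {n : ℕ} (p : List (Fin n)) : Prop :=
  p ≠ [] ∧ (∀ v : Fin n, v ∈ p) ∧ ∀ q ∈ cyclicPairs p, q.1 ≠ q.2

theorem lamTerm_add (A B : Fin n → Fin n → Fin n → ℝ) (i j : Fin n) :
    lamTerm n (fun u v w => A u v w + B u v w) i j
      = lamTerm n A i j + lamTerm n B i j := by
  unfold lamTerm
  rw [← Finset.sum_add_distrib]
  apply Finset.sum_congr rfl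
  intro k _
  ring

theorem shortcut (hn : 3 ≤ n) :
    ∀ (N : ℕ) (p : List (Fin n)), p.length ≤ N → Walkish p →
      ∃ (σ : Equiv.Perm (Fin n)) (Λ : Fin n → Fin n → Fin n → ℝ), LamOK n Λ ∧
        ∀ i j : Fin n, i ≠ j →
          (tourMult n σ i j : ℝ) + lamTerm n Λ i j ≤ (multE p i j : ℝ) := by
  intro N
  induction N with
  | zero =>
    intro p hlen hW
    exact absurd (List.length_eq_zero_iff.mp (Nat.le_zero.mp hlen)) hW.1
  | succ N IH =>
    intro p hlen hW
    by_cases hnd : p.Nodup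
    · -- base case: p is already a tour
      have htf : p.toFinset = Finset.univ := by
        ext u; simp [hW.2.1 u]
      have hplen : p.length = n := by
        have h1 := List.toFinset_card_of_nodup hnd
        rw [htf] at h1
        simpa using h1.symm
      have hinj : Function.Injective (fun k : Fin n => p.get (Fin.cast hplen.symm k)) := by
        intro u1 u2 h
        have h2 := List.nodup_iff_injective_get.mp hnd h
        have h3 := congrArg Fin.val h2
        exact Fin.ext (by simpa using h3)
      have hbij := Finite.injective_iff_bijective.mp hinj
      refine ⟨Equiv.ofBijective _ hbij, fun _ _ _ => 0,
        ⟨fun _ _ _ => le_refl 0, fun _ _ _ => rfl, fun _ _ _ _ => rfl⟩, ?_⟩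
      have hp : p = List.ofFn ⇑(Equiv.ofBijective _ hbij) := by
        apply List.ext_get (by simp [hplen])
        intro k h1 h2
        rw [List.get_ofFn]
        show p.get _ = p.get _
        congr 1
      intro i j hij
      have hEq : multE p i j = tourMult n (Equiv.ofBijective _ hbij) i j := by
        conv_lhs => rw [hp]
        rw [multE_ofFn]
      rw [lamTerm_zero, add_zero, hEq]
    · -- inductive case: shortcut a duplicate
      obtain ⟨v, hv⟩ : ∃ v : Fin n, 1 < p.count v := by
        by_contra h
        push_neg at h
        exact hnd (List.nodup_iff_count_le_one.mpr h)
      obtain ⟨h0, t, rfl⟩ : ∃ h0 t, p = h0 :: t := by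
        rcases p with _ | ⟨h0, t⟩
        · exact absurd rfl hW.1
        · exact ⟨h0, t, rfl⟩
      have hvt : v ∈ t := by
        by_contra hvn
        have h1 : List.count v t = 0 := List.count_eq_zero.mpr hvn
        have h2 : List.count v (h0 :: t) ≤ 1 := by
          rw [List.count_cons, h1]
          split <;> omega
        omega
      obtain ⟨t1, t2, rfl⟩ := List.append_of_mem hvt
      set m := t1.length with hm
      have hmle : m ≤ (h0 :: t1).length := by simp [hm]
      obtain ⟨w, hw⟩ : ∃ w, (h0 :: t1).drop m = [w] := by
        apply List.length_eq_one_iff.mp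
        rw [List.length_drop]
        simp only [List.length_cons]
        omega
      have hsplit : h0 :: (t1 ++ v :: t2) = (h0 :: t1) ++ (v :: t2) := by simp
      have hrot : (h0 :: (t1 ++ v :: t2)).rotate m
          = w :: v :: (t2 ++ (h0 :: t1).take m) := by
        rw [hsplit, List.rotate_eq_drop_append_take
          (by simp only [List.length_append, List.length_cons]; omega),
          List.drop_append_of_le_length hmle, List.take_append_of_le_length hmle, hw]
        simp
      have hlenp : 3 ≤ (h0 :: (t1 ++ v :: t2)).length := by
        have htf : (h0 :: (t1 ++ v :: t2)).toFinset = Finset.univ := by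
          apply Finset.eq_univ_of_forall
          intro u
          rw [List.mem_toFinset]
          exact hW.2.1 u
        have h1 : n ≤ (h0 :: (t1 ++ v :: t2)).length := by
          calc n = (Finset.univ : Finset (Fin n)).card := by simp
          _ = (h0 :: (t1 ++ v :: t2)).toFinset.card := by rw [htf]
          _ ≤ (h0 :: (t1 ++ v :: t2)).length := List.toFinset_card_le _
        omega
      obtain ⟨c, t', hct⟩ : ∃ c t', t2 ++ (h0 :: t1).take m = c :: t' := by
        rcases hcase : t2 ++ (h0 :: t1).take m with _ | ⟨c, t'⟩
        · exfalso
          have h6 := congrArg List.length hcase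
          rw [List.length_append, List.length_take] at h6
          simp only [List.length_cons, List.length_nil, List.length_append] at h6 hlenp
          omega
        · exact ⟨c, t', rfl⟩
      have hrot2 : (h0 :: (t1 ++ v :: t2)).rotate m = w :: v :: c :: t' := by
        rw [hrot, hct]
      have hlen4 : (h0 :: (t1 ++ v :: t2)).length = 3 + t'.length := by
        have h5 := congrArg List.length hrot2
        simp only [List.length_rotate, List.length_cons, List.length_append] at h5 ⊢
        omega
      have hWrot : ∀ q ∈ cyclicPairs (w :: v :: c :: t'), q.1 ≠ q.2 := by
        intro q hq
        apply hW.2.2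
        have h1 : q ∈ cyclicPairs ((h0 :: (t1 ++ v :: t2)).rotate m) := by
          rw [hrot2]; exact hq
        rw [cyclicPairs_rotate] at h1
        exact List.mem_rotate.mp h1
      have hzip : cyclicPairs (w :: v :: c :: t')
          = (w, v) :: (v, c) :: (c :: t').zip (t' ++ [w]) := by
        rw [cyclicPairs_cons]
        simp
      have hwv : w ≠ v := hWrot (w, v) (by rw [hzip]; simp)
      have hvc : v ≠ c := hWrot (v, c) (by rw [hzip]; simp)
      have hcount : (w :: v :: c :: t').count v = (h0 :: (t1 ++ v :: t2)).count v := by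
        rw [← hrot2]
        exact (List.rotate_perm _ _).count_eq v
      have hvct : v ∈ c :: t' := by
        rw [← List.count_pos_iff]
        rw [List.count_cons_of_ne hwv, List.count_cons_self] at hcount
        omega
      have hcover : ∀ u : Fin n, u ∈ w :: v :: c :: t' := by
        intro u
        rw [← hrot2]
        exact List.mem_rotate.mpr (hW.2.1 u)
      have hmulE1 : ∀ i j : Fin n, multE (w :: v :: c :: t') i j
          = ((c :: t').zip (t' ++ [w])).countP
              (fun q => decide ((q.1 = i ∧ q.2 = j) ∨ (q.1 = j ∧ q.2 = i)))
            + (if (v = i ∧ c = j) ∨ (v = j ∧ c = i) then 1 else 0)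
            + (if (w = i ∧ v = j) ∨ (w = j ∧ v = i) then 1 else 0) := by
        intro i j
        unfold multE
        rw [hzip, List.countP_cons, List.countP_cons]
        simp [decide_eq_true_eq]
      have hmrot : ∀ i j : Fin n, multE (h0 :: (t1 ++ v :: t2)) i j
          = multE (w :: v :: c :: t') i j := by
        intro i j
        rw [← hrot2, multE_rotate]
      by_cases hwc : w = c
      · -- degenerate shortcut: delete v and the extra copy of w
        subst hwc
        have hW'' : Walkish (w :: t') := by
          refine ⟨List.cons_ne_nil _ _, ?_, ?_⟩
          · intro u
            have hu := hcover u
            simp only [List.mem_cons] at hu ⊢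
            rcases hu with rfl | rfl | rfl | hu
            · exact Or.inl rfl
            · simpa using hvct
            · exact Or.inl rfl
            · exact Or.inr hu
          · intro q hq
            apply hWrot
            rw [hzip]
            rw [cyclicPairs_cons] at hq
            simp only [List.mem_cons]
            exact Or.inr (Or.inr hq)
        obtain ⟨σ, Λ, hOK, hineq⟩ := IH (w :: t') (by simp at hlen hlen4 ⊢; omega) hW''
        refine ⟨σ, Λ, hOK, ?_⟩
        intro i j hij
        refine (hineq i j hij).trans ?_
        rw [Nat.cast_le, hmrot i j, hmulE1 i j]
        have : multE (w :: t') i j = ((w :: t').zip (t' ++ [w])).countP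
            (fun q => decide ((q.1 = i ∧ q.2 = j) ∨ (q.1 = j ∧ q.2 = i))) := by
          unfold multE
          rw [cyclicPairs_cons]
        rw [this]
        omega
      · -- genuine shortcut with a triangle move
        have hW'' : Walkish (w :: c :: t') := by
          refine ⟨List.cons_ne_nil _ _, ?_, ?_⟩
          · intro u
            have hu := hcover u
            simp only [List.mem_cons] at hu ⊢
            rcases hu with rfl | rfl | rfl | hu
            · exact Or.inl rfl
            · exact Or.inr (by simpa using hvct)
            · exact Or.inr (Or.inl rfl)
            · exact Or.inr (Or.inr hu)
          · intro q hq
            rw [cyclicPairs_cons] at hq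
            have : q = (w, c) ∨ q ∈ (c :: t').zip (t' ++ [w]) := by
              simpa using hq
            rcases this with rfl | hq2
            · exact hwc
            · apply hWrot
              rw [hzip]
              simp only [List.mem_cons]
              exact Or.inr (Or.inr hq2)
        obtain ⟨σ, Λ₀, hOK₀, hineq⟩ := IH (w :: c :: t') (by simp at hlen hlen4 ⊢; omega) hW''
        have htri := triLam_lamOK w v c hwv hvc hwc
        refine ⟨σ, fun u1 u2 u3 => Λ₀ u1 u2 u3 + triLam w v c u1 u2 u3, ⟨?_, ?_, ?_⟩, ?_⟩
        · intro u1 u2 u3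
          exact add_nonneg (hOK₀.1 u1 u2 u3) (htri.1 u1 u2 u3)
        · intro u1 u2 u3
          dsimp only
          rw [hOK₀.2.1 u1 u2 u3, htri.2.1 u1 u2 u3]
        · intro u1 u2 u3 h
          dsimp only
          rw [hOK₀.2.2 u1 u2 u3 h, htri.2.2 u1 u2 u3 h, add_zero]
        intro i j hij
        rw [lamTerm_add, lamTerm_triLam w v c hwv hvc hwc i j hij]
        have h2 := hineq i j hij
        have e1 : multE (w :: c :: t') i j
            = ((c :: t').zip (t' ++ [w])).countP
                (fun q => decide ((q.1 = i ∧ q.2 = j) ∨ (q.1 = j ∧ q.2 = i)))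
              + (if (w = i ∧ c = j) ∨ (w = j ∧ c = i) then 1 else 0) := by
          unfold multE
          rw [cyclicPairs_cons]
          have : (w :: c :: t').zip ((c :: t') ++ [w])
              = (w, c) :: (c :: t').zip (t' ++ [w]) := by simp
          rw [this, List.countP_cons]
          simp [decide_eq_true_eq]
        rw [e1] at h2
        rw [hmrot i j, hmulE1 i j]
        by_cases b1 : (w = i ∧ c = j) ∨ (w = j ∧ c = i) <;>
          by_cases b2 : (w = i ∧ v = j) ∨ (w = j ∧ v = i) <;>
          by_cases b3 : (v = i ∧ c = j) ∨ (v = j ∧ c = i) <;>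
          simp only [b1, b2, b3, if_true, if_false, iff_true, iff_false] at h2 ⊢ <;>
          push_cast at h2 ⊢ <;>
          linarith

end MyAux4

section MyAux5
variable {n : ℕ}

theorem walkish_of_ham {p : List (Fin n)} (h : IsHamWalk (fun i j : Fin n => i ≠ j) p) :
    Walkish p := ⟨h.1, h.2.1, h.2.2.1⟩

theorem shortcut' (hn : 3 ≤ n) :
    ∀ p : List (Fin n), ∃ (σ : Equiv.Perm (Fin n)) (Λ : Fin n → Fin n → Fin n → ℝ),
      LamOK n Λ ∧ (Walkish p → ∀ i j : Fin n, i ≠ j →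
        (tourMult n σ i j : ℝ) + lamTerm n Λ i j ≤ (multE p i j : ℝ)) := by
  intro p
  by_cases h : Walkish p
  · obtain ⟨σ, Λ, hOK, hle⟩ := shortcut hn p.length p le_rfl h
    exact ⟨σ, Λ, hOK, fun _ => hle⟩
  · exact ⟨1, fun _ _ _ => 0,
      ⟨fun _ _ _ => le_refl 0, fun _ _ _ => rfl, fun _ _ _ _ => rfl⟩,
      fun hw => absurd hw h⟩

end MyAux5

/-- For every vertex `x` of `P_SEP(n)`, the LPs `DOPTI(x)`
and `DOPT⁺(x)` have the same optimal value. -/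
theorem DOPTI_eq_DOPTplus (n : ℕ) (hn : 3 ≤ n)
    (x : Fin n → Fin n → ℝ) (hx : IsVertex n x) :
    DOPTI n x = DOPTplus n x := by
  classical
  unfold DOPTI DOPTplus
  congr 1
  ext r
  simp only [Set.mem_setOf_eq]
  constructor
  · -- DOPTI feasible → DOPT⁺ feasible, via shortcutting
    rintro ⟨lam, μ, ⟨hLam, hpos, hsupp, hcon⟩, rfl⟩
    choose σf Λf hOK hle using shortcut' hn
    refine ⟨fun u1 u2 u3 => lam u1 u2 u3 + ∑ p ∈ μ.support, μ p * Λf p u1 u2 u3,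
      fun τ => ∑ p ∈ μ.support, if σf p = τ then μ p else 0, ⟨⟨?_, ?_, ?_⟩, ?_, ?_⟩, ?_⟩
    · intro u1 u2 u3
      apply add_nonneg (hLam.1 u1 u2 u3)
      apply Finset.sum_nonneg
      intro p _
      exact mul_nonneg (hpos p) ((hOK p).1 u1 u2 u3)
    · intro u1 u2 u3
      dsimp only
      rw [hLam.2.1 u1 u2 u3]
      congr 1
      apply Finset.sum_congr rfl
      intro p _
      rw [(hOK p).2.1 u1 u2 u3]
    · intro u1 u2 u3 h
      dsimp only
      rw [hLam.2.2 u1 u2 u3 h, zero_add]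
      apply Finset.sum_eq_zero
      intro p _
      rw [(hOK p).2.2 u1 u2 u3 h, mul_zero]
    · intro τ
      apply Finset.sum_nonneg
      intro p _
      split
      · exact hpos p
      · exact le_refl 0
    · intro i j hij
      rw [lamTerm_add_sum]
      have hswap : ∑ τ : Equiv.Perm (Fin n), (tourMult n τ i j : ℝ)
            * (∑ p ∈ μ.support, if σf p = τ then μ p else 0)
          = ∑ p ∈ μ.support, (tourMult n (σf p) i j : ℝ) * μ p := by
        simp only [Finset.mul_sum, mul_ite, mul_zero]
        rw [Finset.sum_comm]
        apply Finset.sum_congr rfl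
        intro p _
        rw [Finset.sum_ite_eq]
        simp
      rw [hswap]
      have hterm : ∀ p ∈ μ.support,
          μ p * lamTerm n (Λf p) i j + (tourMult n (σf p) i j : ℝ) * μ p
            ≤ (multE p i j : ℝ) * μ p := by
        intro p hp
        have h4 := mul_le_mul_of_nonneg_right
          (hle p (walkish_of_ham (hsupp p hp)) i j hij) (hpos p)
        calc μ p * lamTerm n (Λf p) i j + (tourMult n (σf p) i j : ℝ) * μ p
            = ((tourMult n (σf p) i j : ℝ) + lamTerm n (Λf p) i j) * μ p := by ring
          _ ≤ (multE p i j : ℝ) * μ p := h4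
      have hs : ∑ p ∈ μ.support, (μ p * lamTerm n (Λf p) i j
            + (tourMult n (σf p) i j : ℝ) * μ p)
          ≤ ∑ p ∈ μ.support, (multE p i j : ℝ) * μ p :=
        Finset.sum_le_sum hterm
      rw [Finset.sum_add_distrib] at hs
      have h5 := hcon i j hij
      linarith
    · have hval : ∑ τ : Equiv.Perm (Fin n), (∑ p ∈ μ.support, if σf p = τ then μ p else 0)
          = ∑ p ∈ μ.support, μ p := by
        rw [Finset.sum_comm]
        apply Finset.sum_congr rfl
        intro p _
        rw [Finset.sum_ite_eq]
        simp
      exact hval.symm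
  · -- DOPT⁺ feasible → DOPTI feasible: tours are walks
    rintro ⟨lam, μ, ⟨hLam, hpos, hcon⟩, rfl⟩
    set F : Equiv.Perm (Fin n) → List (Fin n) := fun σ => List.ofFn ⇑σ with hF
    have hFinj : Function.Injective F := fun σ1 σ2 h =>
      Equiv.coe_fn_injective (List.ofFn_injective h)
    set M : Equiv.Perm (Fin n) →₀ ℝ := Finsupp.equivFunOnFinite.symm μ with hM
    have hMa : ∀ σ, M σ = μ σ := fun σ => rfl
    set ν : List (Fin n) →₀ ℝ := Finsupp.mapDomain F M with hν
    have hνr : ∀ σ, ν (F σ) = μ σ := by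
      intro σ
      rw [hν, Finsupp.mapDomain_apply hFinj, hMa]
    have hνn : ∀ p, p ∉ Set.range F → ν p = 0 := by
      intro p hp
      rw [hν, Finsupp.mapDomain_notin_range _ _ hp]
    have hνpos : ∀ p, 0 ≤ ν p := by
      intro p
      by_cases hp : p ∈ Set.range F
      · obtain ⟨σ, rfl⟩ := hp
        rw [hνr]
        exact hpos σ
      · rw [hνn p hp]
    have hsum : ∀ g : List (Fin n) → ℝ → ℝ, (∀ p, g p 0 = 0) →
        (∀ p y1 y2, g p (y1 + y2) = g p y1 + g p y2) →
        ∑ p ∈ ν.support, g p (ν p) = ∑ σ : Equiv.Perm (Fin n), g (F σ) (μ σ) := by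
      intro g hg0 hgadd
      have h1 : ∑ p ∈ ν.support, g p (ν p) = ν.sum g := rfl
      rw [h1, hν, Finsupp.sum_mapDomain_index hg0 hgadd,
        Finsupp.sum_fintype _ _ (fun σ => hg0 (F σ))]
      rfl
    refine ⟨lam, ν, ⟨hLam, hνpos, ?_, ?_⟩, ?_⟩
    · intro p hp
      have hpn : ν p ≠ 0 := Finsupp.mem_support_iff.mp hp
      by_cases hr : p ∈ Set.range F
      · obtain ⟨σ, rfl⟩ := hr
        exact isHamWalk_ofFn hn σ
      · exact absurd (hνn p hr) hpn
    · intro i j hij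
      have h2 : ∑ p ∈ ν.support, (multE p i j : ℝ) * ν p
          = ∑ σ : Equiv.Perm (Fin n), (tourMult n σ i j : ℝ) * μ σ := by
        rw [hsum (fun p y => (multE p i j : ℝ) * y) (fun p => mul_zero _)
          (fun p y1 y2 => mul_add _ _ _)]
        apply Finset.sum_congr rfl
        intro σ _
        rw [hF]
        simp only
        rw [multE_ofFn]
      rw [h2]
      exact hcon i j hij
    · rw [hsum (fun _ y => y) (fun _ => rfl) (fun _ _ _ => rfl)]
end

section
/- Let x ∈ P_SEP(n) have a 1-edge ab. Then BB(x, ab) is a vertex of P_SEP(n+1) if and only if x is a vertex of P_SEP(n). -/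
open Finset

section BBaux

variable {n : ℕ}

lemma sum_ite_else {α : Type*} [DecidableEq α] (s : Finset α) (f : α → ℝ) (c : ℝ)
    {b : α} (hb : b ∈ s) :
    ∑ j ∈ s, (if j = b then c else f j) = ∑ j ∈ s, f j - f b + c := by
  have h1 : ∑ j ∈ s, (if j = b then c else f j)
      = (if b = b then c else f b) + ∑ j ∈ s.erase b, (if j = b then c else f j) :=
    (Finset.add_sum_erase s _ hb).symm
  have h2 : ∑ j ∈ s, f j = f b + ∑ j ∈ s.erase b, f j := (Finset.add_sum_erase s f hb).symm
  have h3 : ∑ j ∈ s.erase b, (if j = b then c else f j) = ∑ j ∈ s.erase b, f j :=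
    Finset.sum_congr rfl fun j hj => if_neg (Finset.ne_of_mem_erase hj)
  rw [h1, h3, if_pos rfl, h2]; ring

lemma sum_ind_ab {m : ℕ} (s : Finset (Fin m)) (a b : Fin m) (hab : a ≠ b) :
    ∑ j ∈ s, (if j = a ∨ j = b then (1:ℝ) else 0)
      = (if a ∈ s then 1 else 0) + (if b ∈ s then 1 else 0) := by
  have key : ∀ j, (if j = a ∨ j = b then (1:ℝ) else 0)
      = (if j = a then 1 else 0) + (if j = b then 1 else 0) := by
    intro j
    by_cases h1 : j = a
    · subst h1; simp [hab]
    · by_cases h2 : j = b <;> simp [h1, h2, Ne.symm hab]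
  rw [Finset.sum_congr rfl fun j _ => key j, Finset.sum_add_distrib,
    Finset.sum_ite_eq' s a fun _ => (1:ℝ), Finset.sum_ite_eq' s b fun _ => (1:ℝ)]

lemma sum_split (S : Finset (Fin (n+1))) (f : Fin (n+1) → ℝ) :
    ∑ i ∈ S, f i = ∑ i ∈ Finset.univ.filter (fun i : Fin n => i.castSucc ∈ S), f i.castSucc
      + (if Fin.last n ∈ S then f (Fin.last n) else 0) := by
  rw [show (∑ i ∈ S, f i) = ∑ i : Fin (n+1), if i ∈ S then f i else 0 by
    rw [Finset.sum_ite_mem, Finset.univ_inter]]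
  rw [Fin.sum_univ_castSucc]
  congr 1
  rw [Finset.sum_filter]

lemma filter_compl (S : Finset (Fin (n+1))) :
    Finset.univ.filter (fun i : Fin n => i.castSucc ∈ Sᶜ)
      = (Finset.univ.filter (fun i : Fin n => i.castSucc ∈ S))ᶜ := by
  ext i; simp

lemma cut_split (y : Fin (n+1) → Fin (n+1) → ℝ) (S : Finset (Fin (n+1)))
    (hw : Fin.last n ∉ S) :
    ∑ i ∈ S, ∑ j ∈ Sᶜ, y i j
      = (∑ i ∈ Finset.univ.filter (fun i : Fin n => i.castSucc ∈ S),
          ∑ j ∈ (Finset.univ.filter (fun i : Fin n => i.castSucc ∈ S))ᶜ, y i.castSucc j.castSucc)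
        + ∑ i ∈ Finset.univ.filter (fun i : Fin n => i.castSucc ∈ S), y i.castSucc (Fin.last n) := by
  rw [sum_split S]
  simp only [hw, if_false, add_zero]
  rw [← Finset.sum_add_distrib]
  refine Finset.sum_congr rfl fun i _ => ?_
  rw [sum_split Sᶜ, filter_compl]
  simp [hw]

lemma cut_compl {m : ℕ} (y : Fin m → Fin m → ℝ) (hsym : ∀ i j, y i j = y j i)
    (S : Finset (Fin m)) :
    ∑ i ∈ Sᶜ, ∑ j ∈ Sᶜᶜ, y i j = ∑ i ∈ S, ∑ j ∈ Sᶜ, y i j := by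
  rw [compl_compl, Finset.sum_comm]
  exact Finset.sum_congr rfl fun i _ => Finset.sum_congr rfl fun j _ => hsym j i

lemma cut_small {m : ℕ} {x : Fin m → Fin m → ℝ} (hx : InPSEP m x)
    (S : Finset (Fin m)) (h1 : S.Nonempty) (h2 : S.card ≤ 2) :
    2 ≤ ∑ i ∈ S, ∑ j ∈ Sᶜ, x i j := by
  obtain ⟨hsym, hdiag, hdeg, _, hbnd⟩ := hx
  have key : ∀ v : Fin m, ∑ j ∈ Sᶜ, x v j = 2 - ∑ j ∈ S, x v j := by
    intro v
    have := Finset.sum_compl_add_sum S (fun j => x v j)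
    rw [hdeg v] at this
    linarith
  interval_cases h : S.card
  · exact absurd (Finset.card_eq_zero.mp h) (Finset.nonempty_iff_ne_empty.mp h1)
  · obtain ⟨v, rfl⟩ := Finset.card_eq_one.mp h
    rw [Finset.sum_singleton, key, Finset.sum_singleton, hdiag]
    norm_num
  · obtain ⟨u, v, huv, rfl⟩ := Finset.card_eq_two.mp h
    rw [Finset.sum_pair huv, key, key, Finset.sum_pair huv, Finset.sum_pair huv,
      hdiag, hdiag, hsym v u]
    have := (hbnd u v).2
    linarith

lemma cut_ge_two {m : ℕ} {x : Fin m → Fin m → ℝ} (hx : InPSEP m x)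
    (S : Finset (Fin m)) (h1 : S.Nonempty) (h2 : Sᶜ.Nonempty) :
    2 ≤ ∑ i ∈ S, ∑ j ∈ Sᶜ, x i j := by
  by_cases hs : S.card ≤ 2
  · exact cut_small hx S h1 hs
  by_cases hc : Sᶜ.card ≤ 2
  · rw [← cut_compl x hx.1 S]
    exact cut_small hx Sᶜ h2 hc
  · have hcard : Sᶜ.card = m - S.card := by
      rw [Finset.card_compl, Fintype.card_fin]
    refine hx.2.2.2.1 S (by omega) ?_
    have := Finset.card_le_univ S
    rw [Fintype.card_fin] at this
    omega

end BBaux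
section BBentry

variable {n : ℕ} (x : Fin n → Fin n → ℝ) (a b : Fin n)

lemma BB_cast_cast (i j : Fin n) :
    BB x a b i.castSucc j.castSucc
      = if (i = a ∧ j = b) ∨ (i = b ∧ j = a) then 0 else x i j := by
  unfold BB
  rw [dif_neg (Fin.castSucc_lt_last i).ne, dif_neg (Fin.castSucc_lt_last j).ne]
  simp only [Fin.castSucc_inj, Fin.castPred_castSucc]

lemma BB_cast_last (i : Fin n) :
    BB x a b i.castSucc (Fin.last n) = if i = a ∨ i = b then 1 else 0 := by
  unfold BB
  rw [dif_neg (Fin.castSucc_lt_last i).ne, dif_pos rfl]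
  simp only [Fin.castSucc_inj]

lemma BB_last_cast (j : Fin n) :
    BB x a b (Fin.last n) j.castSucc = if j = a ∨ j = b then 1 else 0 := by
  unfold BB
  rw [dif_pos rfl]
  simp only [Fin.castSucc_inj]

lemma BB_last_last : BB x a b (Fin.last n) (Fin.last n) = 0 := by
  unfold BB
  rw [dif_pos rfl]
  simp [(Fin.castSucc_lt_last a).ne', (Fin.castSucc_lt_last b).ne']

lemma BB_sym (hsym : ∀ i j, x i j = x j i) (i j : Fin (n+1)) :
    BB x a b i j = BB x a b j i := by
  induction i using Fin.lastCases with
  | last =>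
    induction j using Fin.lastCases with
    | last => rfl
    | cast j => rw [BB_last_cast, BB_cast_last]
  | cast i =>
    induction j using Fin.lastCases with
    | last => rw [BB_last_cast, BB_cast_last]
    | cast j =>
      rw [BB_cast_cast, BB_cast_cast]
      by_cases h : (i = a ∧ j = b) ∨ (i = b ∧ j = a)
      · rw [if_pos h, if_pos (by tauto)]
      · rw [if_neg h, if_neg (by tauto), hsym]

end BBentry
section BBmem

variable {n : ℕ}

lemma exists_cast_mem (S : Finset (Fin (n+1))) (h : 2 ≤ S.card) :
    ∃ i : Fin n, i.castSucc ∈ S := by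
  have : (S.erase (Fin.last n)).Nonempty := by
    rw [← Finset.card_pos]
    have := Finset.pred_card_le_card_erase (s := S) (a := Fin.last n)
    omega
  obtain ⟨v, hv⟩ := this
  have hvne : v ≠ Fin.last n := Finset.ne_of_mem_erase hv
  exact ⟨v.castPred hvne, by rw [Fin.castSucc_castPred]; exact Finset.mem_of_mem_erase hv⟩

/-- Core cut bound for `BB x a b` on sets avoiding the new node. -/
lemma BB_cut_core {x : Fin n → Fin n → ℝ} (hx : InPSEP n x) {a b : Fin n}
    (hab : a ≠ b) (h1 : x a b = 1)
    (S : Finset (Fin (n+1))) (hw : Fin.last n ∉ S)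
    (hT1 : (Finset.univ.filter (fun i : Fin n => i.castSucc ∈ S)).Nonempty)
    (hT2 : (Finset.univ.filter (fun i : Fin n => i.castSucc ∈ S))ᶜ.Nonempty) :
    2 ≤ ∑ i ∈ S, ∑ j ∈ Sᶜ, BB x a b i j := by
  set T := Finset.univ.filter (fun i : Fin n => i.castSucc ∈ S) with hT
  rw [cut_split _ S hw]
  have hxT : 2 ≤ ∑ i ∈ T, ∑ j ∈ Tᶜ, x i j := cut_ge_two hx T hT1 hT2
  have hwsum : ∑ i ∈ T, BB x a b i.castSucc (Fin.last n)
      = (if a ∈ T then (1:ℝ) else 0) + (if b ∈ T then 1 else 0) := by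
    rw [Finset.sum_congr rfl fun i _ => BB_cast_last x a b i]
    exact sum_ind_ab T a b hab
  by_cases ha : a ∈ T <;> by_cases hb : b ∈ T
  · -- both in: pattern never crosses
    have hD : ∑ i ∈ T, ∑ j ∈ Tᶜ, BB x a b i.castSucc j.castSucc
        = ∑ i ∈ T, ∑ j ∈ Tᶜ, x i j := by
      refine Finset.sum_congr rfl fun i _ => Finset.sum_congr rfl fun j hj => ?_
      rw [BB_cast_cast]
      refine if_neg ?_
      rintro (⟨rfl, rfl⟩ | ⟨rfl, rfl⟩) <;> exact (Finset.mem_compl.mp hj) ‹_›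
    rw [hD, hwsum, if_pos ha, if_pos hb]
    linarith
  · -- a in, b out
    have hbc : b ∈ Tᶜ := Finset.mem_compl.mpr hb
    have hD : ∑ i ∈ T, ∑ j ∈ Tᶜ, BB x a b i.castSucc j.castSucc
        = (∑ i ∈ T, ∑ j ∈ Tᶜ, x i j) - 1 := by
      have inner : ∀ i ∈ T, ∑ j ∈ Tᶜ, BB x a b i.castSucc j.castSucc
          = ∑ j ∈ Tᶜ, (if j = b ∧ i = a then 0 else x i j) := by
        intro i hi
        refine Finset.sum_congr rfl fun j hj => ?_
        rw [BB_cast_cast]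
        congr 1
        simp only [eq_iff_iff]
        constructor
        · rintro (⟨h1', h2'⟩ | ⟨rfl, rfl⟩)
          · exact ⟨h2', h1'⟩
          · exact absurd hi hb
        · rintro ⟨rfl, rfl⟩; left; exact ⟨rfl, rfl⟩
      rw [Finset.sum_congr rfl inner]
      rw [← Finset.add_sum_erase T _ ha, ← Finset.add_sum_erase T (fun i => ∑ j ∈ Tᶜ, x i j) ha]
      have herase : ∑ i ∈ T.erase a, ∑ j ∈ Tᶜ, (if j = b ∧ i = a then 0 else x i j)
          = ∑ i ∈ T.erase a, ∑ j ∈ Tᶜ, x i j := by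
        refine Finset.sum_congr rfl fun i hi => Finset.sum_congr rfl fun j _ => ?_
        exact if_neg fun h => Finset.ne_of_mem_erase hi h.2
      have hata : ∑ j ∈ Tᶜ, (if j = b ∧ a = a then 0 else x a j)
          = ∑ j ∈ Tᶜ, (if j = b then 0 else x a j) := by
        refine Finset.sum_congr rfl fun j _ => by simp
      rw [herase, hata, sum_ite_else Tᶜ (fun j => x a j) 0 hbc, h1]
      ring
    rw [hD, hwsum, if_pos ha, if_neg hb]
    linarith
  · -- b in, a out
    have hac : a ∈ Tᶜ := Finset.mem_compl.mpr ha
    have hD : ∑ i ∈ T, ∑ j ∈ Tᶜ, BB x a b i.castSucc j.castSucc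
        = (∑ i ∈ T, ∑ j ∈ Tᶜ, x i j) - 1 := by
      have inner : ∀ i ∈ T, ∑ j ∈ Tᶜ, BB x a b i.castSucc j.castSucc
          = ∑ j ∈ Tᶜ, (if j = a ∧ i = b then 0 else x i j) := by
        intro i hi
        refine Finset.sum_congr rfl fun j hj => ?_
        rw [BB_cast_cast]
        congr 1
        simp only [eq_iff_iff]
        constructor
        · rintro (⟨rfl, rfl⟩ | ⟨h1', h2'⟩)
          · exact absurd hi ha
          · exact ⟨h2', h1'⟩
        · rintro ⟨rfl, rfl⟩; right; exact ⟨rfl, rfl⟩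
      rw [Finset.sum_congr rfl inner]
      rw [← Finset.add_sum_erase T _ hb, ← Finset.add_sum_erase T (fun i => ∑ j ∈ Tᶜ, x i j) hb]
      have herase : ∑ i ∈ T.erase b, ∑ j ∈ Tᶜ, (if j = a ∧ i = b then 0 else x i j)
          = ∑ i ∈ T.erase b, ∑ j ∈ Tᶜ, x i j := by
        refine Finset.sum_congr rfl fun i hi => Finset.sum_congr rfl fun j _ => ?_
        exact if_neg fun h => Finset.ne_of_mem_erase hi h.2
      have hata : ∑ j ∈ Tᶜ, (if j = a ∧ b = b then 0 else x b j)
          = ∑ j ∈ Tᶜ, (if j = a then 0 else x b j) := by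
        refine Finset.sum_congr rfl fun j _ => by simp
      rw [herase, hata, sum_ite_else Tᶜ (fun j => x b j) 0 hac, hx.1 b a, h1]
      ring
    rw [hD, hwsum, if_neg ha, if_pos hb]
    linarith
  · -- both out
    have hD : ∑ i ∈ T, ∑ j ∈ Tᶜ, BB x a b i.castSucc j.castSucc
        = ∑ i ∈ T, ∑ j ∈ Tᶜ, x i j := by
      refine Finset.sum_congr rfl fun i hi => Finset.sum_congr rfl fun j _ => ?_
      rw [BB_cast_cast]
      refine if_neg ?_
      rintro (⟨rfl, rfl⟩ | ⟨rfl, rfl⟩) <;> exact ‹¬_› hi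
    rw [hD, hwsum, if_neg ha, if_neg hb]
    linarith

lemma BB_mem {x : Fin n → Fin n → ℝ} (hx : InPSEP n x) {a b : Fin n}
    (hab : a ≠ b) (h1 : x a b = 1) : InPSEP (n+1) (BB x a b) := by
  obtain ⟨hsym, hdiag, hdeg, hcut, hbnd⟩ := hx
  refine ⟨BB_sym x a b hsym, ?_, ?_, ?_, ?_⟩
  · -- diagonal
    intro i
    induction i using Fin.lastCases with
    | last => exact BB_last_last x a b
    | cast i =>
      rw [BB_cast_cast]
      rw [if_neg (by rintro (⟨rfl, rfl⟩ | ⟨rfl, rfl⟩) <;> exact hab rfl)]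
      exact hdiag i
  · -- degrees
    intro v
    induction v using Fin.lastCases with
    | last =>
      rw [Fin.sum_univ_castSucc]
      rw [BB_last_last, Finset.sum_congr rfl fun j _ => BB_last_cast x a b j]
      rw [sum_ind_ab Finset.univ a b hab]
      simp only [Finset.mem_univ, if_pos]
      norm_num
    | cast v =>
      rw [Fin.sum_univ_castSucc, BB_cast_last,
        Finset.sum_congr rfl fun j (_ : j ∈ Finset.univ) => BB_cast_cast x a b v j]
      by_cases hva : v = a
      · have hvb : v ≠ b := fun h => hab (hva ▸ h ▸ rfl)
        rw [if_pos (Or.inl hva)]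
        have heq : ∑ j : Fin n, (if (v = a ∧ j = b) ∨ (v = b ∧ j = a) then (0:ℝ) else x v j)
            = ∑ j : Fin n, (if j = b then 0 else x v j) := by
          refine Finset.sum_congr rfl fun j _ => ?_
          congr 1
          simp only [eq_iff_iff]
          constructor
          · rintro (⟨_, h⟩ | ⟨h, _⟩) <;> [exact h; exact absurd h hvb]
          · rintro rfl; exact Or.inl ⟨hva, rfl⟩
        have hxvb : x v b = 1 := by rw [hva]; exact h1
        rw [heq, sum_ite_else Finset.univ (fun j => x v j) 0 (Finset.mem_univ b), hdeg v, hxvb]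
        ring
      · by_cases hvb : v = b
        · rw [if_pos (Or.inr hvb)]
          have heq : ∑ j : Fin n, (if (v = a ∧ j = b) ∨ (v = b ∧ j = a) then (0:ℝ) else x v j)
              = ∑ j : Fin n, (if j = a then 0 else x v j) := by
            refine Finset.sum_congr rfl fun j _ => ?_
            congr 1
            simp only [eq_iff_iff]
            constructor
            · rintro (⟨h, _⟩ | ⟨_, h⟩) <;> [exact absurd h hva; exact h]
            · rintro rfl; exact Or.inr ⟨hvb, rfl⟩
          have hxva : x v a = 1 := by rw [hvb, hsym b a]; exact h1
          rw [heq, sum_ite_else Finset.univ (fun j => x v j) 0 (Finset.mem_univ a), hdeg v, hxva]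
          ring
        · rw [if_neg (by tauto)]
          have : ∑ j : Fin n, (if (v = a ∧ j = b) ∨ (v = b ∧ j = a) then (0:ℝ) else x v j)
              = ∑ j : Fin n, x v j := by
            refine Finset.sum_congr rfl fun j _ => if_neg (by tauto)
          rw [this, hdeg v]
          ring
  · -- cuts
    intro S hS3 hSn
    have hxmem : InPSEP n x := ⟨hsym, hdiag, hdeg, hcut, hbnd⟩
    by_cases hw : Fin.last n ∈ S
    · rw [← cut_compl (BB x a b) (BB_sym x a b hsym) S]
      have hwc : Fin.last n ∉ Sᶜ := by simp [hw]
      have hcc : 3 ≤ Sᶜ.card := by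
        rw [Finset.card_compl, Fintype.card_fin]; omega
      obtain ⟨i, hi⟩ := exists_cast_mem Sᶜ (by omega)
      obtain ⟨j, hj⟩ := exists_cast_mem S (by omega)
      refine BB_cut_core hxmem hab h1 Sᶜ hwc ⟨i, by simpa using hi⟩ ⟨j, ?_⟩
      simp only [Finset.mem_compl, Finset.mem_filter, Finset.mem_univ, true_and]
      simp [hj]
    · obtain ⟨i, hi⟩ := exists_cast_mem S (by omega)
      have hcc : 3 ≤ Sᶜ.card := by
        rw [Finset.card_compl, Fintype.card_fin]; omega
      obtain ⟨j, hj⟩ := exists_cast_mem Sᶜ (by omega)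
      refine BB_cut_core hxmem hab h1 S hw ⟨i, by simpa using hi⟩ ⟨j, ?_⟩
      simp only [Finset.mem_compl, Finset.mem_filter, Finset.mem_univ, true_and]
      simpa using hj
  · -- bounds
    intro i j
    induction i using Fin.lastCases with
    | last =>
      induction j using Fin.lastCases with
      | last => rw [BB_last_last]; norm_num
      | cast j => rw [BB_last_cast]; split_ifs <;> norm_num
    | cast i =>
      induction j using Fin.lastCases with
      | last => rw [BB_cast_last]; split_ifs <;> norm_num
      | cast j =>
        rw [BB_cast_cast]
        split_ifs
        · norm_num
        · exact hbnd i j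

end BBmem
section UnBB

variable {n : ℕ}

lemma pattern_left {a b i j : Fin n} (hab : a ≠ b) (hia : i = a) :
    ((i = a ∧ j = b) ∨ (i = b ∧ j = a)) ↔ j = b := by
  subst hia
  constructor
  · rintro (⟨_, h⟩ | ⟨h, _⟩) <;> [exact h; exact absurd h hab]
  · rintro rfl; exact Or.inl ⟨rfl, rfl⟩

lemma pattern_right {a b i j : Fin n} (hab : a ≠ b) (hib : i = b) :
    ((i = a ∧ j = b) ∨ (i = b ∧ j = a)) ↔ j = a := by
  subst hib
  constructor
  · rintro (⟨h, _⟩ | ⟨_, h⟩) <;> [exact absurd h (Ne.symm hab); exact h]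
  · rintro rfl; exact Or.inr ⟨rfl, rfl⟩

lemma pattern_none {a b i j : Fin n} (hia : i ≠ a) (hib : i ≠ b) :
    ¬((i = a ∧ j = b) ∨ (i = b ∧ j = a)) := by tauto

/-- Inverse of the BB-move: delete the node `w` and restore the `1`-edge `ab`. -/
noncomputable def unBB (a b : Fin n) (y : Fin (n+1) → Fin (n+1) → ℝ) (i j : Fin n) : ℝ :=
  if (i = a ∧ j = b) ∨ (i = b ∧ j = a) then 1 else y i.castSucc j.castSucc

variable {Y : Fin (n+1) → Fin (n+1) → ℝ} {a b : Fin n}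

/-- The other edges at the new node vanish. -/
lemma pinned_zero (hY : InPSEP (n+1) Y) (hab : a ≠ b)
    (p1 : Y a.castSucc (Fin.last n) = 1) (p2 : Y b.castSucc (Fin.last n) = 1) :
    ∀ j, j ≠ a → j ≠ b → Y j.castSucc (Fin.last n) = 0 := by
  obtain ⟨hsym, hdiag, hdeg, _, hbnd⟩ := hY
  have hdw := hdeg (Fin.last n)
  rw [Fin.sum_univ_castSucc, hdiag] at hdw
  have hsplit := Finset.sum_compl_add_sum ({a, b} : Finset (Fin n))
    (fun j => Y (Fin.last n) j.castSucc)
  rw [Finset.sum_pair hab] at hsplit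
  have hz : ∑ j ∈ ({a, b} : Finset (Fin n))ᶜ, Y (Fin.last n) j.castSucc = 0 := by
    rw [hsym (Fin.last n) a.castSucc, p1, hsym (Fin.last n) b.castSucc, p2] at hsplit
    have : ∑ j : Fin n, Y (Fin.last n) j.castSucc = 2 := by
      have : ∑ j : Fin n, Y (Fin.last n) j.castSucc
          = ∑ j : Fin n, Y j.castSucc (Fin.last n) :=
        Finset.sum_congr rfl fun j _ => hsym _ _
      rw [this]; linarith
    linarith
  intro j hja hjb
  have hjmem : j ∈ ({a, b} : Finset (Fin n))ᶜ := by simp [hja, hjb]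
  have := (Finset.sum_eq_zero_iff_of_nonneg
    (fun j _ => (hbnd (Fin.last n) j.castSucc).1)).mp hz j hjmem
  rw [hsym] at this
  exact this

lemma unBB_cut_core (hY : InPSEP (n+1) Y) (hab : a ≠ b)
    (p1 : Y a.castSucc (Fin.last n) = 1) (p2 : Y b.castSucc (Fin.last n) = 1)
    (p3 : Y a.castSucc b.castSucc = 0)
    (S₀ : Finset (Fin n)) (h1 : S₀.Nonempty) (h2 : S₀ᶜ.Nonempty) (hA : a ∉ S₀) :
    2 ≤ ∑ i ∈ S₀, ∑ j ∈ S₀ᶜ, unBB a b Y i j := by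
  have p4 := pinned_zero hY hab p1 p2
  set S : Finset (Fin (n+1)) := S₀.image Fin.castSucc with hS
  have hlS : Fin.last n ∉ S := by
    simp only [hS, Finset.mem_image]
    rintro ⟨i, _, hi⟩
    exact (Fin.castSucc_lt_last i).ne hi
  have hfilter : Finset.univ.filter (fun i : Fin n => i.castSucc ∈ S) = S₀ := by
    ext i
    simp [hS, Fin.castSucc_inj]
  have hge : 2 ≤ ∑ i ∈ S, ∑ j ∈ Sᶜ, Y i j := by
    refine cut_ge_two hY S (h1.image _) ⟨Fin.last n, Finset.mem_compl.mpr hlS⟩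
  rw [cut_split Y S hlS, hfilter] at hge
  by_cases hb : b ∈ S₀
  · -- b inside, a outside
    have hwterm : ∑ i ∈ S₀, Y i.castSucc (Fin.last n) = 1 := by
      rw [← Finset.add_sum_erase S₀ _ hb, p2]
      have : ∑ i ∈ S₀.erase b, Y i.castSucc (Fin.last n) = 0 :=
        Finset.sum_eq_zero fun i hi =>
          p4 i (fun h => hA (by rw [← h]; exact Finset.mem_of_mem_erase hi))
            (Finset.ne_of_mem_erase hi)
      rw [this]; ring
    have hD : ∑ i ∈ S₀, ∑ j ∈ S₀ᶜ, unBB a b Y i j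
        = (∑ i ∈ S₀, ∑ j ∈ S₀ᶜ, Y i.castSucc j.castSucc) + 1 := by
      rw [← Finset.add_sum_erase S₀ (fun i => ∑ j ∈ S₀ᶜ, unBB a b Y i j) hb,
        ← Finset.add_sum_erase S₀ (fun i => ∑ j ∈ S₀ᶜ, Y i.castSucc j.castSucc) hb]
      have herase : ∑ i ∈ S₀.erase b, ∑ j ∈ S₀ᶜ, unBB a b Y i j
          = ∑ i ∈ S₀.erase b, ∑ j ∈ S₀ᶜ, Y i.castSucc j.castSucc := by
        refine Finset.sum_congr rfl fun i hi => Finset.sum_congr rfl fun j _ => ?_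
        exact if_neg (pattern_none
          (fun h => hA (by rw [← h]; exact Finset.mem_of_mem_erase hi))
          (Finset.ne_of_mem_erase hi))
      have hbrow : ∑ j ∈ S₀ᶜ, unBB a b Y b j
          = (∑ j ∈ S₀ᶜ, Y b.castSucc j.castSucc) + 1 := by
        have : ∀ j, unBB a b Y b j = if j = a then 1 else Y b.castSucc j.castSucc := by
          intro j
          unfold unBB
          exact if_congr (pattern_right hab rfl) rfl rfl
        rw [Finset.sum_congr rfl fun j _ => this j,
          sum_ite_else S₀ᶜ (fun j => Y b.castSucc j.castSucc) 1 (Finset.mem_compl.mpr hA),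
          hY.1 b.castSucc a.castSucc, p3]
        ring
      rw [herase, hbrow]
      ring
    rw [hD]
    linarith
  · -- both outside
    have hwterm : ∑ i ∈ S₀, Y i.castSucc (Fin.last n) = 0 :=
      Finset.sum_eq_zero fun i hi =>
        p4 i (fun h => hA (by rw [← h]; exact hi)) (fun h => hb (by rw [← h]; exact hi))
    have hD : ∑ i ∈ S₀, ∑ j ∈ S₀ᶜ, unBB a b Y i j
        = ∑ i ∈ S₀, ∑ j ∈ S₀ᶜ, Y i.castSucc j.castSucc := by
      refine Finset.sum_congr rfl fun i hi => Finset.sum_congr rfl fun j _ => ?_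
      exact if_neg (pattern_none (fun h => hA (by rw [← h]; exact hi))
        (fun h => hb (by rw [← h]; exact hi)))
    rw [hD]
    linarith

lemma unBB_sym (hsym : ∀ i j, Y i j = Y j i) (i j : Fin n) :
    unBB a b Y i j = unBB a b Y j i := by
  unfold unBB
  by_cases h : (i = a ∧ j = b) ∨ (i = b ∧ j = a)
  · rw [if_pos h, if_pos (by tauto)]
  · rw [if_neg h, if_neg (by tauto), hsym]

lemma unBB_mem (hY : InPSEP (n+1) Y) (hab : a ≠ b)
    (p1 : Y a.castSucc (Fin.last n) = 1) (p2 : Y b.castSucc (Fin.last n) = 1)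
    (p3 : Y a.castSucc b.castSucc = 0) :
    InPSEP n (unBB a b Y) := by
  have p4 := pinned_zero hY hab p1 p2
  obtain ⟨hsym, hdiag, hdeg, hcut, hbnd⟩ := hY
  have hYmem : InPSEP (n+1) Y := ⟨hsym, hdiag, hdeg, hcut, hbnd⟩
  have hdegcast : ∀ v : Fin n, ∑ j : Fin n, Y v.castSucc j.castSucc
      = 2 - Y v.castSucc (Fin.last n) := by
    intro v
    have := hdeg v.castSucc
    rw [Fin.sum_univ_castSucc] at this
    linarith
  refine ⟨unBB_sym hsym, ?_, ?_, ?_, ?_⟩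
  · intro i
    unfold unBB
    have hpat : ¬((i = a ∧ i = b) ∨ (i = b ∧ i = a)) := by
      rintro (⟨h1, h2⟩ | ⟨h1, h2⟩)
      · exact hab (h1.symm.trans h2)
      · exact hab (h2.symm.trans h1)
    rw [if_neg hpat, hdiag]
  · intro v
    by_cases hva : v = a
    · have hrow : ∀ j, unBB a b Y v j = if j = b then 1 else Y v.castSucc j.castSucc := by
        intro j
        unfold unBB
        exact if_congr (pattern_left hab hva) rfl rfl
      rw [Finset.sum_congr rfl fun j _ => hrow j,
        sum_ite_else Finset.univ (fun j => Y v.castSucc j.castSucc) 1 (Finset.mem_univ b),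
        hdegcast v]
      have e1 : Y v.castSucc (Fin.last n) = 1 := by rw [hva]; exact p1
      have e2 : Y v.castSucc b.castSucc = 0 := by rw [hva]; exact p3
      rw [e1, e2]; ring
    · by_cases hvb : v = b
      · have hrow : ∀ j, unBB a b Y v j = if j = a then 1 else Y v.castSucc j.castSucc := by
          intro j
          unfold unBB
          exact if_congr (pattern_right hab hvb) rfl rfl
        rw [Finset.sum_congr rfl fun j _ => hrow j,
          sum_ite_else Finset.univ (fun j => Y v.castSucc j.castSucc) 1 (Finset.mem_univ a),
          hdegcast v]
        have e1 : Y v.castSucc (Fin.last n) = 1 := by rw [hvb]; exact p2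
        have e2 : Y v.castSucc a.castSucc = 0 := by rw [hvb, hsym]; exact p3
        rw [e1, e2]; ring
      · have hrow : ∀ j, unBB a b Y v j = Y v.castSucc j.castSucc := by
          intro j
          unfold unBB
          rw [if_neg (pattern_none hva hvb)]
        rw [Finset.sum_congr rfl fun j _ => hrow j, hdegcast v, p4 v hva hvb]
        ring
  · intro S₀ h3 hn3
    have h1 : S₀.Nonempty := Finset.card_pos.mp (by omega)
    have h2 : S₀ᶜ.Nonempty := by
      rw [← Finset.card_pos, Finset.card_compl, Fintype.card_fin]
      omega
    by_cases hA : a ∈ S₀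
    · rw [← cut_compl (unBB a b Y) (unBB_sym hsym) S₀]
      refine unBB_cut_core hYmem hab p1 p2 p3 S₀ᶜ h2 (by rwa [compl_compl]) ?_
      simp [hA]
    · exact unBB_cut_core hYmem hab p1 p2 p3 S₀ h1 h2 hA
  · intro i j
    unfold unBB
    split_ifs
    · norm_num
    · exact hbnd _ _

end UnBB
section RoundTrip

variable {n : ℕ}

lemma unBB_BB {x : Fin n → Fin n → ℝ} {a b : Fin n}
    (h1 : x a b = 1) (h1' : x b a = 1) :
    unBB a b (BB x a b) = x := by
  funext i j
  unfold unBB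
  by_cases h : (i = a ∧ j = b) ∨ (i = b ∧ j = a)
  · rw [if_pos h]
    rcases h with ⟨rfl, rfl⟩ | ⟨rfl, rfl⟩
    · exact h1.symm
    · exact h1'.symm
  · rw [if_neg h, BB_cast_cast, if_neg h]

lemma BB_unBB {Y : Fin (n+1) → Fin (n+1) → ℝ} {a b : Fin n}
    (hsym : ∀ i j, Y i j = Y j i) (hdiag : ∀ i, Y i i = 0)
    (p1 : Y a.castSucc (Fin.last n) = 1) (p2 : Y b.castSucc (Fin.last n) = 1)
    (p3 : Y a.castSucc b.castSucc = 0)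
    (p4 : ∀ j, j ≠ a → j ≠ b → Y j.castSucc (Fin.last n) = 0) :
    BB (unBB a b Y) a b = Y := by
  funext i j
  induction i using Fin.lastCases with
  | last =>
    induction j using Fin.lastCases with
    | last => rw [BB_last_last, hdiag]
    | cast j =>
      rw [BB_last_cast]
      by_cases hja : j = a
      · rw [if_pos (Or.inl hja), hsym, hja, p1]
      · by_cases hjb : j = b
        · rw [if_pos (Or.inr hjb), hsym, hjb, p2]
        · rw [if_neg (by tauto), hsym, p4 j hja hjb]
  | cast i =>
    induction j using Fin.lastCases with
    | last =>
      rw [BB_cast_last]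
      by_cases hia : i = a
      · rw [if_pos (Or.inl hia), hia, p1]
      · by_cases hib : i = b
        · rw [if_pos (Or.inr hib), hib, p2]
        · rw [if_neg (by tauto), p4 i hia hib]
    | cast j =>
      rw [BB_cast_cast]
      by_cases h : (i = a ∧ j = b) ∨ (i = b ∧ j = a)
      · rw [if_pos h]
        rcases h with ⟨rfl, rfl⟩ | ⟨rfl, rfl⟩
        · exact p3.symm
        · rw [hsym, p3]
      · rw [if_neg h]
        unfold unBB
        rw [if_neg h]

lemma pin_zero {α β u v : ℝ} (hα : 0 < α) (hβ : 0 < β)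
    (h : α * u + β * v = 0) (hu : 0 ≤ u) (hv : 0 ≤ v) : u = 0 ∧ v = 0 :=
  ⟨by nlinarith, by nlinarith⟩

lemma pin_one {α β u v : ℝ} (hα : 0 < α) (hβ : 0 < β) (hs : α + β = 1)
    (h : α * u + β * v = 1) (hu : u ≤ 1) (hv : v ≤ 1) : u = 1 ∧ v = 1 :=
  ⟨by nlinarith, by nlinarith⟩

end RoundTrip

/-- Let `x ∈ P_SEP(n)` have a `1`-edge `ab`.  Then
`BB(x, ab)` is a vertex of `P_SEP(n+1)` iff `x` is a vertex of `P_SEP(n)`. -/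
theorem bb_move_vertex_iff (n : ℕ) (hn : 3 ≤ n)
    (x : Fin n → Fin n → ℝ) (hx : InPSEP n x)
    (a b : Fin n) (hab : a ≠ b) (h1 : x a b = 1) :
    IsVertex (n + 1) (BB x a b) ↔ IsVertex n x := by
  have h1' : x b a = 1 := by rw [hx.1]; exact h1
  constructor
  · -- BB x is a vertex → x is a vertex
    intro hBB
    rw [IsVertex, mem_extremePoints] at hBB ⊢
    refine ⟨hx, ?_⟩
    rintro y hy z hz ⟨α, β, hα, hβ, hαβ, hcomb⟩
    have hy' : InPSEP n y := hy
    have hz' : InPSEP n z := hz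
    have hentry : ∀ i j, α * y i j + β * z i j = x i j := by
      intro i j
      have := congr_fun (congr_fun hcomb i) j
      simpa using this
    have hpin := pin_one hα hβ hαβ (h1 ▸ hentry a b) (hy'.2.2.2.2 a b).2 (hz'.2.2.2.2 a b).2
    have hyab : y a b = 1 := hpin.1
    have hzab : z a b = 1 := hpin.2
    have hseg' : BB x a b ∈ openSegment ℝ (BB y a b) (BB z a b) := by
      refine ⟨α, β, hα, hβ, hαβ, ?_⟩
      funext i j
      show α * BB y a b i j + β * BB z a b i j = BB x a b i j
      induction i using Fin.lastCases with
      | last =>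
        induction j using Fin.lastCases with
        | last => rw [BB_last_last, BB_last_last, BB_last_last]; ring
        | cast j =>
          rw [BB_last_cast, BB_last_cast, BB_last_cast]
          split_ifs <;> [linarith; ring]
      | cast i =>
        induction j using Fin.lastCases with
        | last =>
          rw [BB_cast_last, BB_cast_last, BB_cast_last]
          split_ifs <;> [linarith; ring]
        | cast j =>
          rw [BB_cast_cast, BB_cast_cast, BB_cast_cast]
          split_ifs
          · ring
          · exact hentry i j
    obtain ⟨hyx, hzx⟩ := hBB.2 (BB y a b) (BB_mem hy' hab hyab) (BB z a b)
      (BB_mem hz' hab hzab) hseg'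
    have hyab' : y b a = 1 := by rw [hy'.1]; exact hyab
    have hzab' : z b a = 1 := by rw [hz'.1]; exact hzab
    constructor
    · rw [← unBB_BB hyab hyab', hyx, unBB_BB h1 h1']
    · rw [← unBB_BB hzab hzab', hzx, unBB_BB h1 h1']
  · -- x is a vertex → BB x is a vertex
    intro hvx
    rw [IsVertex, mem_extremePoints] at hvx ⊢
    refine ⟨BB_mem hx hab h1, ?_⟩
    rintro Y hY Z hZ ⟨α, β, hα, hβ, hαβ, hcomb⟩
    have hY' : InPSEP (n+1) Y := hY
    have hZ' : InPSEP (n+1) Z := hZ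
    have hentry : ∀ i j, α * Y i j + β * Z i j = BB x a b i j := by
      intro i j
      have := congr_fun (congr_fun hcomb i) j
      simpa using this
    have ea : BB x a b a.castSucc (Fin.last n) = 1 := by
      rw [BB_cast_last]; exact if_pos (Or.inl rfl)
    have eb : BB x a b b.castSucc (Fin.last n) = 1 := by
      rw [BB_cast_last]; exact if_pos (Or.inr rfl)
    have eab : BB x a b a.castSucc b.castSucc = 0 := by
      rw [BB_cast_cast]; exact if_pos (Or.inl ⟨rfl, rfl⟩)
    have pinA := pin_one hα hβ hαβ (ea ▸ hentry a.castSucc (Fin.last n))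
      (hY'.2.2.2.2 _ _).2 (hZ'.2.2.2.2 _ _).2
    have pinB := pin_one hα hβ hαβ (eb ▸ hentry b.castSucc (Fin.last n))
      (hY'.2.2.2.2 _ _).2 (hZ'.2.2.2.2 _ _).2
    have pinAB := pin_zero hα hβ (eab ▸ hentry a.castSucc b.castSucc)
      (hY'.2.2.2.2 _ _).1 (hZ'.2.2.2.2 _ _).1
    have hYmem : InPSEP n (unBB a b Y) := unBB_mem hY' hab pinA.1 pinB.1 pinAB.1
    have hZmem : InPSEP n (unBB a b Z) := unBB_mem hZ' hab pinA.2 pinB.2 pinAB.2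
    have hseg' : x ∈ openSegment ℝ (unBB a b Y) (unBB a b Z) := by
      refine ⟨α, β, hα, hβ, hαβ, ?_⟩
      funext i j
      show α * unBB a b Y i j + β * unBB a b Z i j = x i j
      unfold unBB
      by_cases h : (i = a ∧ j = b) ∨ (i = b ∧ j = a)
      · rw [if_pos h, if_pos h]
        rcases h with ⟨rfl, rfl⟩ | ⟨rfl, rfl⟩
        · rw [h1]; ring_nf; linarith
        · rw [h1']; ring_nf; linarith
      · rw [if_neg h, if_neg h]
        have := hentry i.castSucc j.castSucc
        rwa [BB_cast_cast, if_neg h] at this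
    obtain ⟨hyx, hzx⟩ := hvx.2 (unBB a b Y) hYmem (unBB a b Z) hZmem hseg'
    constructor
    · rw [← BB_unBB hY'.1 hY'.2.1 pinA.1 pinB.1 pinAB.1
          (pinned_zero hY' hab pinA.1 pinB.1), hyx]
    · rw [← BB_unBB hZ'.1 hZ'.2.1 pinA.2 pinB.2 pinAB.2
          (pinned_zero hZ' hab pinA.2 pinB.2), hzx]
end
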